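/- arXiv:2205.10934 — 8 statements merged into one kernel-verified Lean document; each statement's English description precedes it below -/
import Mathlib

section
/- Let f_i : ℝ^d → ℝ (i = 1,…,m) be convex functions and F(θ) = (1/m)∑_{i=1}^m f_i(θ), and assume F attains its minimum. Suppose sequences {x_i^k} ⊆ ℝ^d (i = 1,…,m, k ≥ 0), with x̄^k := (1/m)∑_{i=1}^m x_i^k, satisfy: for every minimizer θ* of F and all k ≥ 0, setting v₁^k := ‖x̄^k − θ*‖², v₂^k := ∑_{i=1}^m ‖x_i^k − x̄^k‖², and ζ^k := ∑_{i=1}^m (f_i(x̄^k) − f_i(θ*)), the componentwise inequalities v₁^{k+1} ≤ (1 + a^k) v₁^k + (1 + a^k) v₂^k + b^k − c^k ζ^k and v₂^{k+1} ≤ a^k v₁^k + (η + a^k) v₂^k + b^k hold, where η ∈ (0,1) and {a^k}, {b^k}, {c^k} are nonnegative scalar sequences with ∑_{k=0}^∞ a^k < ∞, ∑_{k=0}^∞ b^k < ∞, and ∑_{k=0}^∞ c^k = ∞. Then lim_{k→∞} ‖x_i^k − x̄^k‖ = 0 for all i, and there exists a minimizer θ* of F such that lim_{k→∞} ‖x̄^k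 − θ*‖ = 0. -/
/-!
The Lyapunov function `‖x̄ᵏ - θ*‖² + μ ∑ᵢ ‖xᵢᵏ - x̄ᵏ‖²` with `μ = 2 / (1 - η)` satisfies a
Robbins–Siegmund inequality whose decrease term is `cᵏ ζᵏ + ∑ᵢ ‖xᵢᵏ - x̄ᵏ‖²`. Hence the consensus
errors are summable, so they tend to zero, `‖x̄ᵏ - θ*‖` converges for every minimizer `θ*`, and
`∑ cᵏ ζᵏ < ∞` together with `∑ cᵏ = ∞` forces `ζᵏ → 0` along a subsequence. A cluster point of
`x̄ᵏ` along that subsequence is a minimizer, and since the distance to it converges, the whole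
sequence converges to it (Opial's argument).
-/

open Filter Topology Finset

theorem exists_tendsto_and_summable_of_le_add_sub {V B Z : ℕ → ℝ} (hV : ∀ k, 0 ≤ V k)
    (hB : ∀ k, 0 ≤ B k) (hZ : ∀ k, 0 ≤ Z k) (hBS : Summable B)
    (hrec : ∀ k, V (k + 1) ≤ V k + B k - Z k) :
    (∃ L, Tendsto V atTop (𝓝 L)) ∧ Summable Z := by
  have htelescope : ∀ n, V n + ∑ j ∈ range n, Z j ≤ V 0 + ∑ j ∈ range n, B j := by
    intro n
    induction n with
    | zero => simp
    | succ n ih => rw [sum_range_succ, sum_range_succ]; linarith [hrec n]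
  have hB_le : ∀ n, ∑ j ∈ range n, B j ≤ ∑' j, B j := fun n =>
    hBS.sum_le_tsum _ fun j _ => hB j
  refine ⟨?_, summable_of_sum_range_le (c := V 0 + ∑' j, B j) hZ fun n => ?_⟩
  · have hanti : Antitone fun n => V n - ∑ j ∈ range n, B j :=
      antitone_nat_of_succ_le fun n => by rw [sum_range_succ]; linarith [hrec n, hZ n]
    have hbdd : BddBelow (Set.range fun n => V n - ∑ j ∈ range n, B j) :=
      ⟨-∑' j, B j, by rintro _ ⟨n, rfl⟩; linarith [hV n, hB_le n]⟩
    exact ⟨_, by simpa using (tendsto_atTop_ciInf hanti hbdd).add hBS.hasSum.tendsto_sum_nat⟩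
  · linarith [htelescope n, hV n, hB_le n]

theorem robbins_siegmund {V A B Z : ℕ → ℝ} (hV : ∀ k, 0 ≤ V k) (hA : ∀ k, 0 ≤ A k)
    (hB : ∀ k, 0 ≤ B k) (hZ : ∀ k, 0 ≤ Z k) (hAS : Summable A) (hBS : Summable B)
    (hrec : ∀ k, V (k + 1) ≤ (1 + A k) * V k + B k - Z k) :
    (∃ L, Tendsto V atTop (𝓝 L)) ∧ Summable Z := by
  set P : ℕ → ℝ := fun n => ∏ j ∈ range n, (1 + A j) with hP
  have hP_one_le : ∀ n, 1 ≤ P n := fun n => Finset.one_le_prod fun j _ => by linarith [hA j]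
  have hP_pos : ∀ n, 0 < P n := fun n => one_pos.trans_le (hP_one_le n)
  have hP_succ : ∀ n, P (n + 1) = (1 + A n) * P n := fun n => by
    simp only [hP, prod_range_succ, mul_comm]
  have hP_lim : Tendsto P atTop (𝓝 (∏' j, (1 + A j))) :=
    (Real.multipliable_one_add_of_summable hAS).tendsto_prod_tprod_nat
  obtain ⟨K, hK⟩ := hP_lim.bddAbove_range
  -- Dividing by `P (n + 1) = (1 + A n) P n` absorbs the growth factor.
  have hscaled : ∀ n, V (n + 1) / P (n + 1) ≤ V n / P n + B n / P (n + 1) - Z n / P (n + 1) := by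
    intro n
    have hA1 : 0 < 1 + A n := by linarith [hA n]
    calc V (n + 1) / P (n + 1) ≤ ((1 + A n) * V n + B n - Z n) / P (n + 1) :=
          div_le_div_of_nonneg_right (hrec n) (hP_pos _).le
      _ = V n / P n + B n / P (n + 1) - Z n / P (n + 1) := by
          rw [hP_succ]; field_simp [(hP_pos n).ne', hA1.ne']
  have hBP : Summable fun n => B n / P (n + 1) :=
    hBS.of_nonneg_of_le (fun n => div_nonneg (hB n) (hP_pos _).le)
      fun n => div_le_self (hB n) (hP_one_le _)
  obtain ⟨⟨L, hL⟩, hZP⟩ := exists_tendsto_and_summable_of_le_add_sub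
    (fun n => div_nonneg (hV n) (hP_pos n).le) (fun n => div_nonneg (hB n) (hP_pos _).le)
    (fun n => div_nonneg (hZ n) (hP_pos _).le) hBP hscaled
  refine ⟨⟨_, (hL.mul hP_lim).congr fun n => div_mul_cancel₀ _ (hP_pos n).ne'⟩, ?_⟩
  refine (hZP.mul_right K).of_nonneg_of_le hZ fun n => ?_
  rw [div_mul_eq_mul_div, le_div_iff₀ (hP_pos _)]
  exact mul_le_mul_of_nonneg_left (hK ⟨n + 1, rfl⟩) (hZ n)

theorem exists_tendsto_and_summable_of_coupled_le {v₁ v₂ a b c z : ℕ → ℝ} {η : ℝ}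
    (hη₀ : 0 ≤ η) (hη₁ : η < 1) (hv₁ : ∀ k, 0 ≤ v₁ k) (hv₂ : ∀ k, 0 ≤ v₂ k)
    (ha : ∀ k, 0 ≤ a k) (hb : ∀ k, 0 ≤ b k) (hcz : ∀ k, 0 ≤ c k * z k)
    (haS : Summable a) (hbS : Summable b)
    (h₁ : ∀ k, v₁ (k + 1) ≤ (1 + a k) * v₁ k + (1 + a k) * v₂ k + b k - c k * z k)
    (h₂ : ∀ k, v₂ (k + 1) ≤ a k * v₁ k + (η + a k) * v₂ k + b k) :
    (∃ L, Tendsto v₁ atTop (𝓝 L)) ∧ Summable v₂ ∧ Summable fun k => c k * z k := by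
  set μ : ℝ := 2 / (1 - η)
  have hμ_mul : μ * (1 - η) = 2 := div_mul_cancel₀ 2 (by linarith)
  have hμ_ge : 1 ≤ μ := by nlinarith
  -- `μ (1 - η) = 2` leaves a spare `v₂ k` on the right, which becomes part of the decrease.
  have hstep : ∀ k, v₁ (k + 1) + μ * v₂ (k + 1) ≤
      (1 + (1 + μ) * a k) * (v₁ k + μ * v₂ k) + (1 + μ) * b k - (c k * z k + v₂ k) := by
    intro k
    have hμ_sq : 0 ≤ (μ ^ 2 - 1) * a k * v₂ k :=
      mul_nonneg (mul_nonneg (by nlinarith) (ha k)) (hv₂ k)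
    have hμ_v₂ : μ * (1 - η) * v₂ k = 2 * v₂ k := by rw [hμ_mul]
    linarith [h₁ k, mul_le_mul_of_nonneg_left (h₂ k) (by linarith : 0 ≤ μ)]
  obtain ⟨⟨L, hL⟩, hdecrease⟩ := robbins_siegmund
    (fun k => add_nonneg (hv₁ k) (mul_nonneg (by linarith) (hv₂ k)))
    (fun k => mul_nonneg (by linarith) (ha k)) (fun k => mul_nonneg (by linarith) (hb k))
    (fun k => add_nonneg (hcz k) (hv₂ k)) (haS.mul_left _) (hbS.mul_left _) hstep
  have hv₂S : Summable v₂ :=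
    hdecrease.of_nonneg_of_le hv₂ fun k => le_add_of_nonneg_left (hcz k)
  refine ⟨⟨L, ?_⟩, hv₂S, hdecrease.of_nonneg_of_le hcz fun k => le_add_of_nonneg_right (hv₂ k)⟩
  simpa using hL.sub (hv₂S.tendsto_atTop_zero.const_mul μ)

theorem exists_strictMono_tendsto_zero_of_summable_mul {c z : ℕ → ℝ} (hc : ∀ k, 0 ≤ c k)
    (hz : ∀ k, 0 ≤ z k) (hcdiv : Tendsto (fun n => ∑ k ∈ range n, c k) atTop atTop)
    (hcz : Summable fun k => c k * z k) :
    ∃ φ : ℕ → ℕ, StrictMono φ ∧ Tendsto (z ∘ φ) atTop (𝓝 0) := by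
  have hfreq : ∀ ε > 0, ∃ᶠ k in atTop, z k < ε := by
    intro ε hε
    by_contra! h
    have hcS : Summable c := by
      refine (hcz.div_const ε).of_norm_bounded_eventually_nat ?_
      filter_upwards [h] with k hk
      rw [Real.norm_of_nonneg (hc k), le_div_iff₀ hε]
      exact mul_le_mul_of_nonneg_left hk (hc k)
    exact not_tendsto_atTop_of_tendsto_nhds hcS.hasSum.tendsto_sum_nat hcdiv
  obtain ⟨φ, hφ, hzφ⟩ := extraction_forall_of_frequently fun n : ℕ =>
    hfreq (1 / ((n : ℝ) + 1)) Nat.one_div_pos_of_nat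
  exact ⟨φ, hφ, squeeze_zero (fun n => hz _) (fun n => (hzφ n).le)
    tendsto_one_div_add_atTop_nhds_zero_nat⟩

theorem tendsto_of_tendsto_dist_of_tendsto_comp {E : Type*} [PseudoMetricSpace E] {y : ℕ → E}
    {θ : E} {L : ℝ} {φ : ℕ → ℕ} (hL : Tendsto (fun k => dist (y k) θ) atTop (𝓝 L))
    (hφ : StrictMono φ) (hyφ : Tendsto (y ∘ φ) atTop (𝓝 θ)) : Tendsto y atTop (𝓝 θ) := by
  have hL₀ : L = 0 :=
    tendsto_nhds_unique (hL.comp hφ.tendsto_atTop) (tendsto_iff_dist_tendsto_zero.1 hyφ)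
  exact tendsto_iff_dist_tendsto_zero.2 (hL₀ ▸ hL)

theorem exists_tendsto_minimizer_of_tendsto_dist {E : Type*} [MetricSpace E] [ProperSpace E]
    {G : E → ℝ} (hG : Continuous G) {y : ℕ → E} {θ₀ : E} (hθ₀ : ∀ z, G θ₀ ≤ G z)
    (hdist : ∀ θ, (∀ z, G θ ≤ G z) → ∃ L, Tendsto (fun k => dist (y k) θ) atTop (𝓝 L))
    {φ : ℕ → ℕ} (hφ : StrictMono φ) (hGφ : Tendsto (fun n => G (y (φ n))) atTop (𝓝 (G θ₀))) :
    ∃ θ, (∀ z, G θ ≤ G z) ∧ Tendsto y atTop (𝓝 θ) := by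
  obtain ⟨L₀, hL₀⟩ := hdist θ₀ hθ₀
  obtain ⟨R, hR⟩ := hL₀.bddAbove_range
  obtain ⟨θ, -, ψ, hψ, hyφψ⟩ := tendsto_subseq_of_bounded (x := y ∘ φ)
    (Metric.isBounded_closedBall (x := θ₀) (r := R)) fun n => hR ⟨φ n, rfl⟩
  have hGθ : G θ = G θ₀ :=
    tendsto_nhds_unique ((hG.tendsto θ).comp hyφψ) (hGφ.comp hψ.tendsto_atTop)
  have hθ : ∀ z, G θ ≤ G z := hGθ ▸ hθ₀
  obtain ⟨L, hL⟩ := hdist θ hθ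
  exact ⟨θ, hθ, tendsto_of_tendsto_dist_of_tendsto_comp hL (hφ.comp hψ) hyφψ⟩

theorem stmt_0_general {d m : ℕ} (hm : 0 < m)
    (f : Fin m → EuclideanSpace ℝ (Fin d) → ℝ)
    (hconv : ∀ i, ConvexOn ℝ Set.univ (f i))
    (F : EuclideanSpace ℝ (Fin d) → ℝ)
    (hF : ∀ θ, F θ = (1 / (m : ℝ)) * ∑ i, f i θ)
    (hmin : ∃ θs, ∀ y, F θs ≤ F y)
    (x : ℕ → Fin m → EuclideanSpace ℝ (Fin d))
    (xbar : ℕ → EuclideanSpace ℝ (Fin d))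
    (η : ℝ) (hη : η ∈ Set.Ioo (0 : ℝ) 1)
    (a b c : ℕ → ℝ)
    (ha0 : ∀ k, 0 ≤ a k) (hb0 : ∀ k, 0 ≤ b k) (hc0 : ∀ k, 0 ≤ c k)
    (haS : Summable a) (hbS : Summable b)
    (hcdiv : Tendsto (fun n => ∑ k ∈ Finset.range n, c k) atTop atTop)
    (hrec1 : ∀ θs, (∀ y, F θs ≤ F y) → ∀ k,
      ‖xbar (k + 1) - θs‖ ^ 2 ≤
        (1 + a k) * ‖xbar k - θs‖ ^ 2
          + (1 + a k) * (∑ i, ‖x k i - xbar k‖ ^ 2)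
          + b k - c k * (∑ i, (f i (xbar k) - f i θs)))
    (hrec2 : ∀ θs, (∀ y, F θs ≤ F y) → ∀ k,
      (∑ i, ‖x (k + 1) i - xbar (k + 1)‖ ^ 2) ≤
        a k * ‖xbar k - θs‖ ^ 2 + (η + a k) * (∑ i, ‖x k i - xbar k‖ ^ 2) + b k) :
    (∀ i, Tendsto (fun k => ‖x k i - xbar k‖) atTop (𝓝 0)) ∧
      ∃ θs, (∀ y, F θs ≤ F y) ∧ Tendsto (fun k => ‖xbar k - θs‖) atTop (𝓝 0) := by
  obtain ⟨θ₀, hθ₀⟩ := hmin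
  have hgap : ∀ θs y, ∑ i, (f i y - f i θs) = m * (F y - F θs) := fun θs y => by
    rw [sum_sub_distrib, hF, hF]; field_simp
  have hgap_nonneg : ∀ θs, (∀ y, F θs ≤ F y) → ∀ y, 0 ≤ ∑ i, (f i y - f i θs) :=
    fun θs hθs y => hgap θs y ▸ mul_nonneg m.cast_nonneg (sub_nonneg.2 (hθs y))
  have hcoupled := fun θs (hθs : ∀ y, F θs ≤ F y) =>
    exists_tendsto_and_summable_of_coupled_le (v₁ := fun k => ‖xbar k - θs‖ ^ 2)
      (v₂ := fun k => ∑ i, ‖x k i - xbar k‖ ^ 2) (z := fun k => ∑ i, (f i (xbar k) - f i θs))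
      hη.1.le hη.2 (fun k => sq_nonneg _)
      (fun k => sum_nonneg fun i _ => sq_nonneg _) ha0 hb0
      (fun k => mul_nonneg (hc0 k) (hgap_nonneg θs hθs _)) haS hbS (hrec1 θs hθs) (hrec2 θs hθs)
  obtain ⟨-, hconsensus, hcgap⟩ := hcoupled θ₀ hθ₀
  refine ⟨fun i => ?_, ?_⟩
  · have hsq : Tendsto (fun k => ‖x k i - xbar k‖ ^ 2) atTop (𝓝 0) :=
      squeeze_zero (fun k => sq_nonneg _)
        (fun k => single_le_sum (fun j _ => sq_nonneg ‖x k j - xbar k‖) (mem_univ i))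
        hconsensus.tendsto_atTop_zero
    simpa using hsq.sqrt
  obtain ⟨φ, hφ, hgapφ⟩ := exists_strictMono_tendsto_zero_of_summable_mul hc0
    (fun k => hgap_nonneg θ₀ hθ₀ (xbar k)) hcdiv hcgap
  have hFφ : Tendsto (fun n => F (xbar (φ n))) atTop (𝓝 (F θ₀)) := by
    simpa [hgap, hm.ne'] using (hgapφ.div_const (m : ℝ)).const_add (F θ₀)
  have hFcont : Continuous F := by
    rw [show F = _ from funext hF]
    exact continuous_const.mul (continuous_finsetSum _ fun i _ =>
      continuousOn_univ.1 ((hconv i).continuousOn isOpen_univ))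
  obtain ⟨θ, hθ, hlim⟩ := exists_tendsto_minimizer_of_tendsto_dist hFcont hθ₀
    (fun θs hθs => by
      obtain ⟨⟨L, hL⟩, -⟩ := hcoupled θs hθs
      exact ⟨_, by simpa [dist_eq_norm] using hL.sqrt⟩) hφ hFφ
  exact ⟨θ, hθ, tendsto_iff_norm_sub_tendsto_zero.1 hlim⟩

/-- Proposition 1: general convergence result for decentralized algorithms. -/
theorem stmt_0 {d m : ℕ} (hm : 0 < m)
    (f : Fin m → EuclideanSpace ℝ (Fin d) → ℝ)
    (hconv : ∀ i, ConvexOn ℝ Set.univ (f i))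
    (F : EuclideanSpace ℝ (Fin d) → ℝ)
    (hF : ∀ θ, F θ = (1 / (m : ℝ)) * ∑ i, f i θ)
    (hmin : ∃ θs, ∀ y, F θs ≤ F y)
    (x : ℕ → Fin m → EuclideanSpace ℝ (Fin d))
    (xbar : ℕ → EuclideanSpace ℝ (Fin d))
    (hxbar : ∀ k, xbar k = (1 / (m : ℝ)) • ∑ i, x k i)
    (η : ℝ) (hη : η ∈ Set.Ioo (0 : ℝ) 1)
    (a b c : ℕ → ℝ)
    (ha0 : ∀ k, 0 ≤ a k) (hb0 : ∀ k, 0 ≤ b k) (hc0 : ∀ k, 0 ≤ c k)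
    (haS : Summable a) (hbS : Summable b)
    (hcdiv : Tendsto (fun n => ∑ k ∈ Finset.range n, c k) atTop atTop)
    (hrec1 : ∀ θs, (∀ y, F θs ≤ F y) → ∀ k,
      ‖xbar (k + 1) - θs‖ ^ 2 ≤
        (1 + a k) * ‖xbar k - θs‖ ^ 2
          + (1 + a k) * (∑ i, ‖x k i - xbar k‖ ^ 2)
          + b k - c k * (∑ i, (f i (xbar k) - f i θs)))
    (hrec2 : ∀ θs, (∀ y, F θs ≤ F y) → ∀ k,
      (∑ i, ‖x (k + 1) i - xbar (k + 1)‖ ^ 2) ≤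
        a k * ‖xbar k - θs‖ ^ 2 + (η + a k) * (∑ i, ‖x k i - xbar k‖ ^ 2) + b k) :
    (∀ i, Tendsto (fun k => ‖x k i - xbar k‖) atTop (𝓝 0)) ∧
      ∃ θs, (∀ y, F θs ≤ F y) ∧ Tendsto (fun k => ‖xbar k - θs‖) atTop (𝓝 0) :=
  stmt_0_general hm f hconv F hF hmin x xbar η hη a b c ha0 hb0 hc0 haS hbS hcdiv hrec1 hrec2
end

section
/- Let {v^k} ⊂ ℝ^d and {u^k} ⊂ ℝ^p be sequences of nonnegative vectors such that v^{k+1} ≤ (V^k + a^k 𝟙𝟙ᵀ) v^k + b^k 𝟙 − C^k u^k holds entrywise for all k ≥ 0, where {V^k} is a sequence of entrywise nonnegative d×d matrices, C^k ∈ ℝ^{d×p}, and {a^k}, {b^k} are nonnegative scalar sequences with ∑_{k=0}^∞ a^k < ∞ and ∑_{k=0}^∞ b^k < ∞. Assume there exists a vector π ∈ ℝ^d with all entries positive such that πᵀ V^k ≤ πᵀ and πᵀ C^k ≥ 0 (entrywise) for all k ≥ 0. Then lim_{k→∞} πᵀ v^k exists, the sequence {v^k} is bounded, and ∑_{k=1}^∞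 πᵀ C^k u^k < ∞. -/
/-!
Weighting the recursion by `π` turns it into a scalar one: `πᵀ V ≤ πᵀ` absorbs the matrix,
`πᵀ C ≥ 0` makes the subtracted term nonnegative, and since `π > 0` the perturbation
`a 𝟙𝟙ᵀ v` is controlled by `πᵀ v` itself. The scalar sequence `w = πᵀ v` then satisfies
`w (k+1) ≤ (1 + α k) w k + β k - s k` with summable `α, β ≥ 0`, and the deterministic
Robbins–Siegmund lemma gives convergence of `w` and summability of `s`. Dividing by the
convergent products `∏_{j<k} (1 + α j)` reduces that lemma to the case `α = 0`, where
`w k + ∑_{j<k} s j - ∑_{j<k} β j` is antitone and bounded below.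
-/

open Filter Topology Finset Matrix

theorem exists_tendsto_and_summable_of_succ_le_add_sub {z s β : ℕ → ℝ} (hz : ∀ k, 0 ≤ z k)
    (hs : ∀ k, 0 ≤ s k) (hβ : ∀ k, 0 ≤ β k) (hβS : Summable β)
    (h : ∀ k, z (k + 1) ≤ z k + β k - s k) :
    (∃ l, Tendsto z atTop (𝓝 l)) ∧ Summable s := by
  set g : ℕ → ℝ := fun k => z k + ∑ j ∈ range k, s j - ∑ j ∈ range k, β j
  have hg : Antitone g := antitone_nat_of_succ_le fun k => by
    simp only [g, sum_range_succ]
    linarith [h k]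
  have hB : ∀ n, ∑ j ∈ range n, β j ≤ ∑' j, β j := fun n =>
    hβS.sum_le_tsum _ fun j _ => hβ j
  have hsS : Summable s := summable_of_sum_range_le (c := z 0 + ∑' j, β j) hs fun n => by
    have : g n ≤ g 0 := hg (Nat.zero_le n)
    simp only [g, range_zero, sum_empty] at this
    linarith [hz n, hB n]
  have hg_bdd : BddBelow (Set.range g) := ⟨-∑' j, β j, by
    rintro _ ⟨k, rfl⟩
    linarith [hz k, hB k, sum_nonneg fun j (_ : j ∈ range k) => hs j]⟩
  have hz_eq : z = fun k => g k - ∑ j ∈ range k, s j + ∑ j ∈ range k, β j := by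
    funext k
    simp only [g]
    ring
  refine ⟨⟨(⨅ k, g k) - ∑' j, s j + ∑' j, β j, ?_⟩, hsS⟩
  rw [hz_eq]
  exact ((tendsto_atTop_ciInf hg hg_bdd).sub hsS.hasSum.tendsto_sum_nat).add
    hβS.hasSum.tendsto_sum_nat

theorem exists_tendsto_and_summable_of_succ_le_one_add_mul {w s α β : ℕ → ℝ}
    (hw : ∀ k, 0 ≤ w k) (hs : ∀ k, 0 ≤ s k) (hα : ∀ k, 0 ≤ α k) (hβ : ∀ k, 0 ≤ β k)
    (hαS : Summable α) (hβS : Summable β) (h : ∀ k, w (k + 1) ≤ (1 + α k) * w k + β k - s k) :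
    (∃ l, Tendsto w atTop (𝓝 l)) ∧ Summable s := by
  set P : ℕ → ℝ := fun k => ∏ j ∈ range k, (1 + α j)
  have hP_one : ∀ k, 1 ≤ P k := fun k => Finset.one_le_prod fun j _ => by linarith [hα j]
  have hP_pos : ∀ k, 0 < P k := fun k => one_pos.trans_le (hP_one k)
  have hP_tendsto : Tendsto P atTop (𝓝 (∏' j, (1 + α j))) :=
    (Real.multipliable_one_add_of_summable hαS).hasProd.tendsto_prod_nat
  obtain ⟨M, hM⟩ := hP_tendsto.bddAbove_range
  have hscaled : ∀ k, w (k + 1) / P (k + 1) ≤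
      w k / P k + β k / P (k + 1) - s k / P (k + 1) := fun k => by
    have hP_succ : P (k + 1) = P k * (1 + α k) := prod_range_succ _ k
    have hscale : (1 + α k) * w k / P (k + 1) = w k / P k := by
      rw [hP_succ]
      field_simp [(hP_pos k).ne', (by linarith [hα k] : 1 + α k ≠ 0)]
    rw [← hscale, ← add_div, ← sub_div]
    exact div_le_div_of_nonneg_right (h k) (hP_pos (k + 1)).le
  obtain ⟨⟨l, hl⟩, hs'⟩ := exists_tendsto_and_summable_of_succ_le_add_sub
    (fun k => div_nonneg (hw k) (hP_pos k).le) (fun k => div_nonneg (hs k) (hP_pos (k + 1)).le)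
    (fun k => div_nonneg (hβ k) (hP_pos (k + 1)).le)
    (hβS.of_nonneg_of_le (fun k => div_nonneg (hβ k) (hP_pos (k + 1)).le)
      fun k => div_le_self (hβ k) (hP_one (k + 1)))
    hscaled
  refine ⟨⟨l * ∏' j, (1 + α j), ?_⟩, ?_⟩
  · refine (hl.mul hP_tendsto).congr fun k => ?_
    exact div_mul_cancel₀ (w k) (hP_pos k).ne'
  · refine (hs'.mul_right M).of_nonneg_of_le hs fun k => ?_
    calc s k = s k / P (k + 1) * P (k + 1) := (div_mul_cancel₀ _ (hP_pos (k + 1)).ne').symm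
      _ ≤ s k / P (k + 1) * M :=
        mul_le_mul_of_nonneg_left (hM ⟨k + 1, rfl⟩) (div_nonneg (hs k) (hP_pos (k + 1)).le)

section WeightedRecursion

variable {ι κ : Type*} [Fintype ι] [Fintype κ]

theorem sum_le_sum_inv_mul_dotProduct {π x : ι → ℝ} (hπ : ∀ i, 0 < π i) (hx : 0 ≤ x) :
    ∑ i, x i ≤ (∑ i, (π i)⁻¹) * (π ⬝ᵥ x) := by
  rw [sum_mul]
  refine sum_le_sum fun i _ => ?_
  have hπx : π i * x i ≤ π ⬝ᵥ x :=
    single_le_sum (fun j _ => mul_nonneg (hπ j).le (hx j)) (mem_univ i)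
  calc x i = (π i)⁻¹ * (π i * x i) := by rw [inv_mul_cancel_left₀ (hπ i).ne']
    _ ≤ (π i)⁻¹ * (π ⬝ᵥ x) := mul_le_mul_of_nonneg_left hπx (inv_nonneg.mpr (hπ i).le)

theorem dotProduct_le_of_le_mulVec_add {π x y : ι → ℝ} {V : Matrix ι ι ℝ} {C : Matrix ι κ ℝ}
    {u : κ → ℝ} {a b : ℝ} (hπ : ∀ i, 0 < π i) (hx : 0 ≤ x) (ha : 0 ≤ a) (hπV : π ᵥ* V ≤ π)
    (h : ∀ i, y i ≤ ∑ j, (V i j + a) * x j + b - ∑ j, C i j * u j) :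
    π ⬝ᵥ y ≤ (1 + a * ((∑ i, π i) * ∑ i, (π i)⁻¹)) * (π ⬝ᵥ x) + b * ∑ i, π i
      - π ⬝ᵥ (C *ᵥ u) := by
  have hy : y ≤ V *ᵥ x + (fun _ => a * ∑ j, x j + b) - C *ᵥ u := fun i => by
    simpa only [add_mul, sum_add_distrib, ← mul_sum, Pi.add_apply, Pi.sub_apply, mulVec,
      dotProduct, add_assoc] using h i
  have hVx : π ⬝ᵥ (V *ᵥ x) ≤ π ⬝ᵥ x := by
    rw [dotProduct_mulVec]
    exact dotProduct_le_dotProduct_of_nonneg_right hπV hx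
  have hsum := sum_le_sum_inv_mul_dotProduct hπ hx
  have hπ_sum : 0 ≤ ∑ i, π i := sum_nonneg fun i _ => (hπ i).le
  calc π ⬝ᵥ y
      ≤ π ⬝ᵥ (V *ᵥ x + (fun _ => a * ∑ j, x j + b) - C *ᵥ u) :=
        dotProduct_le_dotProduct_of_nonneg_left hy fun i => (hπ i).le
    _ = π ⬝ᵥ (V *ᵥ x) + (a * ∑ j, x j + b) * ∑ i, π i - π ⬝ᵥ (C *ᵥ u) := by
        rw [dotProduct_sub, dotProduct_add]
        congr 2
        rw [dotProduct, ← sum_mul, mul_comm]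
    _ ≤ (1 + a * ((∑ i, π i) * ∑ i, (π i)⁻¹)) * (π ⬝ᵥ x) + b * ∑ i, π i
          - π ⬝ᵥ (C *ᵥ u) := by
        linear_combination hVx + mul_le_mul_of_nonneg_left hsum (mul_nonneg ha hπ_sum)

end WeightedRecursion

theorem stmt_2_general {d p : ℕ}
    (v : ℕ → Fin d → ℝ) (u : ℕ → Fin p → ℝ)
    (hv0 : ∀ k i, 0 ≤ v k i) (hu0 : ∀ k j, 0 ≤ u k j)
    (V : ℕ → Matrix (Fin d) (Fin d) ℝ)
    (C : ℕ → Matrix (Fin d) (Fin p) ℝ)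
    (a b : ℕ → ℝ) (ha0 : ∀ k, 0 ≤ a k) (hb0 : ∀ k, 0 ≤ b k)
    (haS : Summable a) (hbS : Summable b)
    (hrec : ∀ k i, v (k + 1) i ≤
      (∑ j, (V k i j + a k) * v k j) + b k - ∑ j, C k i j * u k j)
    (π : Fin d → ℝ) (hπ : ∀ i, 0 < π i)
    (hπV : ∀ k j, ∑ i, π i * V k i j ≤ π j)
    (hπC : ∀ k j, 0 ≤ ∑ i, π i * C k i j) :
    (∃ l, Tendsto (fun k => ∑ i, π i * v k i) atTop (𝓝 l)) ∧
      (∃ M, ∀ k i, v k i ≤ M) ∧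
      Summable (fun k => ∑ i, π i * ∑ j, C k i j * u k j) := by
  have hπ_sum : 0 ≤ ∑ i, π i := sum_nonneg fun i _ => (hπ i).le
  have hπ_inv_sum : 0 ≤ ∑ i, (π i)⁻¹ := sum_nonneg fun i _ => inv_nonneg.mpr (hπ i).le
  obtain ⟨⟨l, hl⟩, hsS⟩ := exists_tendsto_and_summable_of_succ_le_one_add_mul
    (w := fun k => π ⬝ᵥ v k) (s := fun k => π ⬝ᵥ (C k *ᵥ u k))
    (fun k => dotProduct_nonneg_of_nonneg (fun i => (hπ i).le) (hv0 k))
    (fun k => by rw [dotProduct_mulVec]; exact dotProduct_nonneg_of_nonneg (hπC k) (hu0 k))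
    (fun k => mul_nonneg (ha0 k) (mul_nonneg hπ_sum hπ_inv_sum)) (fun k => mul_nonneg (hb0 k) hπ_sum)
    (haS.mul_right _) (hbS.mul_right _)
    (fun k => dotProduct_le_of_le_mulVec_add hπ (hv0 k) (ha0 k) (hπV k) (hrec k))
  obtain ⟨M, hM⟩ := hl.bddAbove_range
  refine ⟨⟨l, hl⟩, ⟨(∑ i, (π i)⁻¹) * M, fun k i => ?_⟩, hsS⟩
  calc v k i ≤ ∑ j, v k j := single_le_sum (fun j _ => hv0 k j) (mem_univ i)
    _ ≤ (∑ j, (π j)⁻¹) * (π ⬝ᵥ v k) := sum_le_sum_inv_mul_dotProduct hπ (hv0 k)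
    _ ≤ (∑ j, (π j)⁻¹) * M := mul_le_mul_of_nonneg_left (hM ⟨k, rfl⟩) hπ_inv_sum

/-- Lemma 1: a vector-sequence supermartingale-type convergence result. -/
theorem stmt_2 {d p : ℕ}
    (v : ℕ → Fin d → ℝ) (u : ℕ → Fin p → ℝ)
    (hv0 : ∀ k i, 0 ≤ v k i) (hu0 : ∀ k j, 0 ≤ u k j)
    (V : ℕ → Matrix (Fin d) (Fin d) ℝ) (hV0 : ∀ k i j, 0 ≤ V k i j)
    (C : ℕ → Matrix (Fin d) (Fin p) ℝ)
    (a b : ℕ → ℝ) (ha0 : ∀ k, 0 ≤ a k) (hb0 : ∀ k, 0 ≤ b k)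
    (haS : Summable a) (hbS : Summable b)
    (hrec : ∀ k i, v (k + 1) i ≤
      (∑ j, (V k i j + a k) * v k j) + b k - ∑ j, C k i j * u k j)
    (π : Fin d → ℝ) (hπ : ∀ i, 0 < π i)
    (hπV : ∀ k j, ∑ i, π i * V k i j ≤ π j)
    (hπC : ∀ k j, 0 ≤ ∑ i, π i * C k i j) :
    (∃ l, Tendsto (fun k => ∑ i, π i * v k i) atTop (𝓝 l)) ∧
      (∃ M, ∀ k i, v k i ≤ M) ∧
      Summable (fun k => ∑ i, π i * ∑ j, C k i j * u k j) :=
  stmt_2_general v u hv0 hu0 V C a b ha0 hb0 haS hbS hrec π hπ hπV hπC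
end

section
/- Let {v^k} ⊂ ℝ^d be a sequence of nonnegative vectors such that v^{k+1} ≤ V^k v^k + b^k 𝟙 holds entrywise for all k ≥ 0, where {V^k} is a sequence of entrywise nonnegative d×d matrices and {b^k} is a nonnegative scalar sequence. Assume there exist a vector π ∈ ℝ^d with all entries positive and a scalar sequence {α^k} with α^k ∈ (0,1), ∑_{k=0}^∞ α^k = ∞, lim_{k→∞} b^k/α^k = 0, and πᵀ V^k ≤ (1 − α^k) πᵀ (entrywise) for all k ≥ 0. Then lim_{k→∞} v^k = 0. -/
/-!
Weighting the entries by `π` collapses the vector recursion to the scalar one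
`s (k+1) ≤ (1 - α k) s k + (∑ π) b k` for `s k = π ⬝ᵥ v k`, because `πᵀ V k ≤ (1 - α k) πᵀ` and
`v k ≥ 0`. For the scalar recursion, fix `ε > 0`: once the forcing term is at most `ε α k`, the excess
`max (s k - ε) 0` contracts by the factor `1 - α k`, and `∏ (1 - α k) ≤ exp (-∑ α k) → 0`.
Positivity of `π` then transfers `s k → 0` to every entry of `v k`.
-/

open Filter Topology Finset Matrix

theorem tendsto_prod_range_one_sub_atTop_zero {α : ℕ → ℝ} (hα1 : ∀ k, α k ≤ 1)
    (hαdiv : Tendsto (fun n => ∑ k ∈ range n, α k) atTop atTop) :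
    Tendsto (fun n => ∏ k ∈ range n, (1 - α k)) atTop (𝓝 0) := by
  have hfactor : ∀ k, 0 ≤ 1 - α k := fun k => sub_nonneg.2 (hα1 k)
  have hexp : ∀ n, ∏ k ∈ range n, (1 - α k) ≤ Real.exp (-∑ k ∈ range n, α k) := fun n =>
    calc ∏ k ∈ range n, (1 - α k) ≤ ∏ k ∈ range n, Real.exp (-α k) :=
          prod_le_prod (fun k _ => hfactor k) fun k _ => by
            linarith [Real.add_one_le_exp (-α k)]
      _ = Real.exp (-∑ k ∈ range n, α k) := by rw [← Real.exp_sum, sum_neg_distrib]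
  exact squeeze_zero (fun n => prod_nonneg fun k _ => hfactor k) hexp
    (Real.tendsto_exp_atBot.comp (tendsto_neg_atTop_atBot.comp hαdiv))

theorem tendsto_sum_range_shift_atTop {α : ℕ → ℝ}
    (hαdiv : Tendsto (fun n => ∑ k ∈ range n, α k) atTop atTop) (N : ℕ) :
    Tendsto (fun n => ∑ k ∈ range n, α (N + k)) atTop atTop := by
  have hshift := (tendsto_add_atTop_iff_nat N).2 hαdiv
  simp only [add_comm _ N, sum_range_add] at hshift
  exact (tendsto_atTop_add_const_left atTop (-∑ k ∈ range N, α k) hshift).congr fun n => by ring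

theorem tendsto_zero_of_le_one_sub_mul {u α : ℕ → ℝ} (hu : ∀ k, 0 ≤ u k)
    (hα1 : ∀ k, α k ≤ 1) (hαdiv : Tendsto (fun n => ∑ k ∈ range n, α k) atTop atTop)
    (hrec : ∀ k, u (k + 1) ≤ (1 - α k) * u k) :
    Tendsto u atTop (𝓝 0) := by
  have hbound : ∀ n, u n ≤ u 0 * ∏ k ∈ range n, (1 - α k) := by
    intro n
    induction n with
    | zero => simp
    | succ n ih =>
      calc u (n + 1) ≤ (1 - α n) * u n := hrec n
        _ ≤ (1 - α n) * (u 0 * ∏ k ∈ range n, (1 - α k)) :=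
          mul_le_mul_of_nonneg_left ih (sub_nonneg.2 (hα1 n))
        _ = u 0 * ∏ k ∈ range (n + 1), (1 - α k) := by rw [prod_range_succ]; ring
  exact squeeze_zero hu hbound <| by
    simpa using (tendsto_prod_range_one_sub_atTop_zero hα1 hαdiv).const_mul (u 0)

theorem tendsto_zero_of_le_one_sub_mul_add {s α β : ℕ → ℝ} (hs : ∀ k, 0 ≤ s k)
    (hα0 : ∀ k, 0 < α k) (hα1 : ∀ k, α k ≤ 1)
    (hαdiv : Tendsto (fun n => ∑ k ∈ range n, α k) atTop atTop)
    (hβα : Tendsto (fun k => β k / α k) atTop (𝓝 0))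
    (hrec : ∀ k, s (k + 1) ≤ (1 - α k) * s k + β k) :
    Tendsto s atTop (𝓝 0) := by
  refine tendsto_order.2 ⟨fun a ha => .of_forall fun k => ha.trans_le (hs k), fun a ha => ?_⟩
  set ε := a / 2 with hεa
  have hε : 0 < ε := half_pos ha
  obtain ⟨N, hN⟩ : ∃ N, ∀ k ≥ N, β k ≤ ε * α k := eventually_atTop.1 <|
    (hβα.eventually_le_const hε).mono fun k hk => (div_le_iff₀ (hα0 k)).1 hk
  have hexcess : Tendsto (fun n => max (s (N + n) - ε) 0) atTop (𝓝 0) := by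
    refine tendsto_zero_of_le_one_sub_mul (α := fun n => α (N + n)) (fun n => le_max_right _ _)
      (fun n => hα1 _) (tendsto_sum_range_shift_atTop hαdiv N) fun n => ?_
    have hcontract : 0 ≤ 1 - α (N + n) := sub_nonneg.2 (hα1 _)
    refine max_le ?_ (mul_nonneg hcontract (le_max_right _ _))
    calc s (N + n + 1) - ε ≤ (1 - α (N + n)) * s (N + n) + ε * α (N + n) - ε := by
          linarith [hrec (N + n), hN (N + n) (Nat.le_add_right N n)]
      _ = (1 - α (N + n)) * (s (N + n) - ε) := by ring
      _ ≤ (1 - α (N + n)) * max (s (N + n) - ε) 0 :=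
          mul_le_mul_of_nonneg_left (le_max_left _ _) hcontract
  have hexcess' : Tendsto (fun k => max (s k - ε) 0) atTop (𝓝 0) :=
    (tendsto_add_atTop_iff_nat (f := fun k => max (s k - ε) 0) N).1 <| by
      simpa only [add_comm N] using hexcess
  filter_upwards [hexcess'.eventually_lt_const hε] with k hk
  linarith [le_max_left (s k - ε) 0, hεa]

theorem dotProduct_le_mul_dotProduct_add {n : Type*} [Fintype n] {π x y : n → ℝ}
    {A : Matrix n n ℝ} {a c : ℝ} (hπ : 0 ≤ π) (hx : 0 ≤ x) (hy : y ≤ A *ᵥ x + c • 1)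
    (hA : π ᵥ* A ≤ a • π) :
    π ⬝ᵥ y ≤ a * (π ⬝ᵥ x) + (∑ i, π i) * c :=
  calc π ⬝ᵥ y ≤ π ⬝ᵥ (A *ᵥ x + c • 1) := dotProduct_le_dotProduct_of_nonneg_left hy hπ
    _ = (π ᵥ* A) ⬝ᵥ x + (∑ i, π i) * c := by
      rw [dotProduct_add, dotProduct_mulVec, dotProduct_smul, dotProduct_one, smul_eq_mul,
        mul_comm]
    _ ≤ (a • π) ⬝ᵥ x + (∑ i, π i) * c := by
      gcongr; exact dotProduct_le_dotProduct_of_nonneg_right hA hx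
    _ = a * (π ⬝ᵥ x) + (∑ i, π i) * c := by rw [smul_dotProduct, smul_eq_mul]

theorem le_dotProduct_div {n : Type*} [Fintype n] {π x : n → ℝ} (hπ : ∀ i, 0 < π i)
    (hx : 0 ≤ x) (i : n) : x i ≤ π ⬝ᵥ x / π i := by
  rw [le_div_iff₀ (hπ i), mul_comm]
  exact single_le_sum (f := fun j => π j * x j) (fun j _ => mul_nonneg (hπ j).le (hx j))
    (mem_univ i)

theorem stmt_3_general {d : ℕ}
    (v : ℕ → Fin d → ℝ) (hv0 : ∀ k i, 0 ≤ v k i)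
    (V : ℕ → Matrix (Fin d) (Fin d) ℝ)
    (b : ℕ → ℝ)
    (hrec : ∀ k i, v (k + 1) i ≤ (∑ j, V k i j * v k j) + b k)
    (π : Fin d → ℝ) (hπ : ∀ i, 0 < π i)
    (α : ℕ → ℝ) (hα : ∀ k, α k ∈ Set.Ioo (0 : ℝ) 1)
    (hαdiv : Tendsto (fun n => ∑ k ∈ Finset.range n, α k) atTop atTop)
    (hbα : Tendsto (fun k => b k / α k) atTop (𝓝 0))
    (hπV : ∀ k j, ∑ i, π i * V k i j ≤ (1 - α k) * π j) :
    ∀ i, Tendsto (fun k => v k i) atTop (𝓝 0) := by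
  have hπ0 : 0 ≤ π := fun i => (hπ i).le
  have hstep : ∀ k, π ⬝ᵥ v (k + 1) ≤ (1 - α k) * (π ⬝ᵥ v k) + (∑ i, π i) * b k := fun k =>
    dotProduct_le_mul_dotProduct_add hπ0 (hv0 k)
      (fun i => by simpa [mulVec, dotProduct] using hrec k i)
      (fun j => by simpa [vecMul, dotProduct] using hπV k j)
  have hweighted : Tendsto (fun k => π ⬝ᵥ v k) atTop (𝓝 0) :=
    tendsto_zero_of_le_one_sub_mul_add (fun k => dotProduct_nonneg_of_nonneg hπ0 (hv0 k))
      (fun k => (hα k).1) (fun k => (hα k).2.le) hαdiv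
      (by simpa [mul_div_assoc] using hbα.const_mul (∑ i, π i)) hstep
  intro i
  exact squeeze_zero (fun k => hv0 k i) (fun k => le_dotProduct_div hπ (hv0 k) i)
    (by simpa using hweighted.div_const (π i))

/-- Lemma 2: a vector-sequence convergence-to-zero result. -/
theorem stmt_3 {d : ℕ}
    (v : ℕ → Fin d → ℝ) (hv0 : ∀ k i, 0 ≤ v k i)
    (V : ℕ → Matrix (Fin d) (Fin d) ℝ) (hV0 : ∀ k i j, 0 ≤ V k i j)
    (b : ℕ → ℝ) (hb0 : ∀ k, 0 ≤ b k)
    (hrec : ∀ k i, v (k + 1) i ≤ (∑ j, V k i j * v k j) + b k)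
    (π : Fin d → ℝ) (hπ : ∀ i, 0 < π i)
    (α : ℕ → ℝ) (hα : ∀ k, α k ∈ Set.Ioo (0 : ℝ) 1)
    (hαdiv : Tendsto (fun n => ∑ k ∈ Finset.range n, α k) atTop atTop)
    (hbα : Tendsto (fun k => b k / α k) atTop (𝓝 0))
    (hπV : ∀ k j, ∑ i, π i * V k i j ≤ (1 - α k) * π j) :
    ∀ i, Tendsto (fun k => v k i) atTop (𝓝 0) :=
  stmt_3_general v hv0 V b hrec π hπ α hα hαdiv hbα hπV
end

section
/- Let F : ℝ^d → ℝ be continuously differentiable and attain its minimum at some θ*. Suppose sequences {x_i^k}, {y_i^k} ⊆ ℝ^d (i = 1,…,m), with averages x̄^k = (1/m)∑_i x_i^k and ȳ^k = (1/m)∑_i y_i^k, satisfy for all k ≥ 0 the entrywise inequality v^{k+1} ≤ (V + a^k 𝟙𝟙ᵀ) v^k + b^k 𝟙 − C^k [‖∇F(x̄^k)‖²; ‖ȳ^k‖²], where ν > 0, v^k := [ν(F(x̄^k) − F(θ*)); ∑_{i=1}^m ‖x_i^k − x̄^k‖²; ∑_{i=1}^m ‖y_i^k − ȳ^k‖²],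 V is the 3×3 matrix with rows (1, 1−η, 0), (0, η, 1/(1−η)), (0, (1−η)²(1−c)(1−δ), c), and C^k is the 3×2 matrix with rows (γ^k, (1−τ^k)/τ^k), (0, 0), (0, −(1−η)²(1−c)), with constants η, c, δ ∈ (0,1) and nonnegative scalar sequences {a^k}, {b^k}, {τ^k}, {γ^k} satisfying τ^k ∈ (0,1), ((1−τ^k)/τ^k)·δ ≥ 1 for all k, ∑_{k=0}^∞ a^k < ∞ and ∑_{k=0}^∞ b^k < ∞. Then lim_{k→∞} F(x̄^k) exists, and lim_{k→∞} ‖ȳ^k‖ = lim_{k→∞} ‖x_i^k − x̄^k‖ = lim_{k→∞} ‖y_i^k − ȳ^k‖ = 0 for all i. -/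
/-!
The weighted sum `W = ν (F x̄ - F θ*) + w₂ ∑ ‖xᵢ - x̄‖² + w₃ ∑ ‖yᵢ - ȳ‖²` of the coordinates of
`v^k` is an almost-supermartingale: for suitable weights `1 ≤ w₂, w₃` the row vector
`(1, w₂, w₃)` strictly decreases under `V` on the two consensus coordinates, and the `‖ȳ‖²`
created by the third row is absorbed by `-((1 - τ)/τ) ‖ȳ‖² ≤ -‖ȳ‖² / δ` from the first row. Thus
`W^{k+1} + (η/4) (consensus errors + ‖ȳ^k‖²) ≤ (1 + K a^k) W^k + K b^k` with `K = 1 + w₂ + w₃`,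
and the deterministic Robbins–Siegmund lemma makes `W` converge and the subtracted terms
summable, hence null.
-/

open Filter Topology Finset

theorem exists_tendsto_of_le_add_summable {u c : ℕ → ℝ} (hu : BddBelow (Set.range u))
    (hc : Summable c) (h : ∀ k, u (k + 1) ≤ u k + c k) : ∃ l, Tendsto u atTop (𝓝 l) := by
  have hC := hc.hasSum.tendsto_sum_nat
  obtain ⟨L, hL⟩ := hu
  obtain ⟨B, hB⟩ := hC.bddAbove_range
  set v : ℕ → ℝ := fun k => u k - ∑ j ∈ range k, c j
  have hv : Antitone v := antitone_nat_of_succ_le fun k => by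
    simp only [v, sum_range_succ]; linarith [h k]
  have hvb : BddBelow (Set.range v) := ⟨L - B, by
    rintro _ ⟨k, rfl⟩
    linarith [hL ⟨k, rfl⟩, hB ⟨k, rfl⟩]⟩
  refine ⟨_, ((tendsto_atTop_ciInf hv hvb).add hC).congr fun k => ?_⟩
  simp [v]

theorem summable_of_add_le_add_summable {u e c : ℕ → ℝ} (hu : BddBelow (Set.range u))
    (he : ∀ k, 0 ≤ e k) (hc : Summable c) (h : ∀ k, u (k + 1) + e k ≤ u k + c k) :
    Summable e := by
  obtain ⟨L, hL⟩ := hu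
  obtain ⟨B, hB⟩ := hc.hasSum.tendsto_sum_nat.bddAbove_range
  refine summable_of_sum_range_le he (c := u 0 - L + B) fun n => ?_
  have htel : ∑ k ∈ range n, e k ≤ u 0 - u n + ∑ k ∈ range n, c k := by
    rw [← sum_range_sub' u n, ← sum_add_distrib]
    exact sum_le_sum fun k _ => by linarith [h k]
  linarith [hL ⟨n, rfl⟩, hB ⟨n, rfl⟩]

theorem bddAbove_range_of_le_one_add_mul_add {u a b : ℕ → ℝ} (hu : ∀ k, 0 ≤ u k)
    (ha : ∀ k, 0 ≤ a k) (hb : ∀ k, 0 ≤ b k) (haS : Summable a) (hbS : Summable b)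
    (h : ∀ k, u (k + 1) ≤ (1 + a k) * u k + b k) : BddAbove (Set.range u) := by
  have hbound : ∀ k, u k ≤ Real.exp (∑ j ∈ range k, a j) * (u 0 + ∑ j ∈ range k, b j) := by
    intro k
    induction k with
    | zero => simp
    | succ k ih =>
      have hexp : 1 + a k ≤ Real.exp (a k) := by linarith [Real.add_one_le_exp (a k)]
      have hone : 1 ≤ Real.exp (∑ j ∈ range (k + 1), a j) :=
        Real.one_le_exp (sum_nonneg fun j _ => ha j)
      calc u (k + 1) ≤ (1 + a k) * u k + b k := h k
        _ ≤ Real.exp (a k) * (Real.exp (∑ j ∈ range k, a j) * (u 0 + ∑ j ∈ range k, b j))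
            + Real.exp (∑ j ∈ range (k + 1), a j) * b k := by
          gcongr
          · exact hu k
          · exact le_mul_of_one_le_left (hb k) hone
        _ = _ := by rw [sum_range_succ, sum_range_succ, Real.exp_add]; ring
  refine ⟨Real.exp (∑' j, a j) * (u 0 + ∑' j, b j), ?_⟩
  rintro _ ⟨k, rfl⟩
  refine (hbound k).trans ?_
  gcongr
  · exact add_nonneg (hu 0) (sum_nonneg fun j _ => hb j)
  · exact haS.sum_le_tsum _ fun j _ => ha j
  · exact hbS.sum_le_tsum _ fun j _ => hb j

theorem exists_tendsto_and_summable_of_add_le_one_add_mul_add {u e a b : ℕ → ℝ}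
    (hu : ∀ k, 0 ≤ u k) (he : ∀ k, 0 ≤ e k) (ha : ∀ k, 0 ≤ a k) (hb : ∀ k, 0 ≤ b k)
    (haS : Summable a) (hbS : Summable b) (h : ∀ k, u (k + 1) + e k ≤ (1 + a k) * u k + b k) :
    (∃ l, Tendsto u atTop (𝓝 l)) ∧ Summable e := by
  obtain ⟨M, hM⟩ := bddAbove_range_of_le_one_add_mul_add hu ha hb haS hbS
    fun k => by linarith [h k, he k]
  have hstep : ∀ k, u (k + 1) + e k ≤ u k + (a k * M + b k) := fun k => by
    nlinarith [h k, mul_le_mul_of_nonneg_left (hM ⟨k, rfl⟩) (ha k)]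
  have hc : Summable fun k => a k * M + b k := (haS.mul_right M).add hbS
  have hbdd : BddBelow (Set.range u) := ⟨0, by rintro _ ⟨k, rfl⟩; exact hu k⟩
  exact ⟨exists_tendsto_of_le_add_summable hbdd hc fun k => by linarith [hstep k, he k],
    summable_of_add_le_add_summable hbdd he hc hstep⟩

theorem tendsto_zero_of_sq_tendsto_zero {α : Type*} {l : Filter α} {f : α → ℝ}
    (hf : ∀ k, 0 ≤ f k) (h : Tendsto (fun k => f k ^ 2) l (𝓝 0)) : Tendsto f l (𝓝 0) := by
  have := (Real.continuous_sqrt.tendsto 0).comp h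
  simpa [Function.comp_def, Real.sqrt_sq (hf _)] using this

theorem tendsto_norm_zero_of_tendsto_sum_norm_sq {α ι E : Type*} [Fintype ι]
    [SeminormedAddCommGroup E] {l : Filter α} {f : α → ι → E}
    (h : Tendsto (fun k => ∑ i, ‖f k i‖ ^ 2) l (𝓝 0)) (i : ι) :
    Tendsto (fun k => ‖f k i‖) l (𝓝 0) :=
  tendsto_zero_of_sq_tendsto_zero (fun _ => norm_nonneg _) <|
    squeeze_zero (fun _ => sq_nonneg _)
      (fun k => single_le_sum (f := fun i => ‖f k i‖ ^ 2) (fun _ _ => sq_nonneg _) (mem_univ i)) h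

/-- The row vector `(1, w₂, w₃)` loses at least `η/4` under `V` in each consensus column, and its
`‖ȳ‖²` coefficient `w₃ (1 - η)² (1 - c)` from the third row stays `η/4` below `1/δ`. -/
structure IsLyapunovWeights (η c δ w₂ w₃ : ℝ) : Prop where
  one_le_w₂ : 1 ≤ w₂
  one_le_w₃ : 1 ≤ w₃
  consensus_x : (1 - η) + w₂ * η + w₃ * ((1 - η) ^ 2 * (1 - c) * (1 - δ)) + η / 4 ≤ w₂
  consensus_y : w₂ * (1 / (1 - η)) + w₃ * c + η / 4 ≤ w₃
  grad_y : w₃ * ((1 - η) ^ 2 * (1 - c)) + η / 4 ≤ 1 / δ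

/-- `w₃` is chosen with `w₃ (1 - η)² (1 - c) δ = 1 - η/2`, and `w₂` makes `consensus_x` an
equality. -/
theorem exists_isLyapunovWeights {η c δ : ℝ} (hη : η ∈ Set.Ioo (0 : ℝ) 1)
    (hc : c ∈ Set.Ioo (0 : ℝ) 1) (hδ : δ ∈ Set.Ioo (0 : ℝ) 1) :
    ∃ w₂ w₃ : ℝ, IsLyapunovWeights η c δ w₂ w₃ := by
  obtain ⟨hη0, hη1⟩ := hη
  obtain ⟨hc0, hc1⟩ := hc
  obtain ⟨hδ0, hδ1⟩ := hδ
  have h1η : 0 < 1 - η := by linarith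
  have h1c : 0 < 1 - c := by linarith
  refine ⟨1 + (2 - η) * (1 - δ) / (2 * (1 - η) * δ) + η / (4 * (1 - η)),
    (2 - η) / (2 * (1 - η) ^ 2 * (1 - c) * δ), ⟨?_, ?_, ?_, ?_, ?_⟩⟩
  · have : 0 ≤ (2 - η) * (1 - δ) / (2 * (1 - η) * δ) := by
      apply div_nonneg <;> nlinarith
    have : 0 ≤ η / (4 * (1 - η)) := by positivity
    linarith
  · rw [le_div_iff₀ (by positivity)]
    nlinarith [mul_pos (mul_pos h1η h1c) hδ0, mul_pos h1η hδ0, mul_pos h1c hδ0]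
  · field_simp
    nlinarith
  · field_simp
    nlinarith [mul_pos (mul_pos (mul_pos hη0 hδ0) h1c) (mul_pos hη0 (by linarith : (0:ℝ) < 2 - η))]
  · field_simp
    nlinarith

theorem IsLyapunovWeights.add_le {η c δ w₂ w₃ r α β A X Y N A' X' Y' : ℝ}
    (hw : IsLyapunovWeights η c δ w₂ w₃)
    (hr : 1 / δ ≤ r) (hα : 0 ≤ α) (hX : 0 ≤ X) (hY : 0 ≤ Y) (hN : 0 ≤ N)
    (h₁ : A' ≤ (1 + α) * A + (1 - η + α) * X + α * Y + β - r * N)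
    (h₂ : X' ≤ α * A + (η + α) * X + (1 / (1 - η) + α) * Y + β)
    (h₃ : Y' ≤ α * A + ((1 - η) ^ 2 * (1 - c) * (1 - δ) + α) * X + (c + α) * Y + β
      + (1 - η) ^ 2 * (1 - c) * N) :
    A' + w₂ * X' + w₃ * Y' + η / 4 * (X + Y + N) ≤
      (1 + (1 + w₂ + w₃) * α) * (A + w₂ * X + w₃ * Y) + (1 + w₂ + w₃) * β := by
  obtain ⟨hw₂, hw₃, hwX, hwY, hwN⟩ := hw
  nlinarith [mul_le_mul_of_nonneg_left h₂ (by linarith : (0 : ℝ) ≤ w₂),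
    mul_le_mul_of_nonneg_left h₃ (by linarith : (0 : ℝ) ≤ w₃),
    mul_le_mul_of_nonneg_right hwX hX, mul_le_mul_of_nonneg_right hwY hY,
    mul_le_mul_of_nonneg_right (hwN.trans hr) hN,
    mul_nonneg (mul_nonneg hα (by linarith : (0 : ℝ) ≤ w₂ - 1)) hX,
    mul_nonneg (mul_nonneg hα (by linarith : (0 : ℝ) ≤ w₃ - 1)) hY]

theorem stmt_4_general {d m : ℕ}
    (F : EuclideanSpace ℝ (Fin d) → ℝ)
    (θs : EuclideanSpace ℝ (Fin d)) (hθs : ∀ y, F θs ≤ F y)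
    (x y : ℕ → Fin m → EuclideanSpace ℝ (Fin d))
    (xbar ybar : ℕ → EuclideanSpace ℝ (Fin d))
    (ν : ℝ) (hν : 0 < ν)
    (η c δ : ℝ)
    (hη : η ∈ Set.Ioo (0 : ℝ) 1) (hc : c ∈ Set.Ioo (0 : ℝ) 1) (hδ : δ ∈ Set.Ioo (0 : ℝ) 1)
    (a b τ γ : ℕ → ℝ)
    (ha0 : ∀ k, 0 ≤ a k) (hb0 : ∀ k, 0 ≤ b k) (hγ0 : ∀ k, 0 ≤ γ k)
    (hτδ : ∀ k, 1 ≤ ((1 - τ k) / τ k) * δ)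
    (haS : Summable a) (hbS : Summable b)
    (hrec1 : ∀ k, ν * (F (xbar (k + 1)) - F θs) ≤
      (1 + a k) * (ν * (F (xbar k) - F θs))
        + ((1 - η) + a k) * (∑ i, ‖x k i - xbar k‖ ^ 2)
        + (0 + a k) * (∑ i, ‖y k i - ybar k‖ ^ 2)
        + b k
        - (γ k * ‖gradient F (xbar k)‖ ^ 2 + ((1 - τ k) / τ k) * ‖ybar k‖ ^ 2))
    (hrec2 : ∀ k, (∑ i, ‖x (k + 1) i - xbar (k + 1)‖ ^ 2) ≤
      (0 + a k) * (ν * (F (xbar k) - F θs))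
        + (η + a k) * (∑ i, ‖x k i - xbar k‖ ^ 2)
        + (1 / (1 - η) + a k) * (∑ i, ‖y k i - ybar k‖ ^ 2)
        + b k
        - (0 * ‖gradient F (xbar k)‖ ^ 2 + 0 * ‖ybar k‖ ^ 2))
    (hrec3 : ∀ k, (∑ i, ‖y (k + 1) i - ybar (k + 1)‖ ^ 2) ≤
      (0 + a k) * (ν * (F (xbar k) - F θs))
        + ((1 - η) ^ 2 * (1 - c) * (1 - δ) + a k) * (∑ i, ‖x k i - xbar k‖ ^ 2)
        + (c + a k) * (∑ i, ‖y k i - ybar k‖ ^ 2)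
        + b k
        - (0 * ‖gradient F (xbar k)‖ ^ 2 + (-((1 - η) ^ 2 * (1 - c))) * ‖ybar k‖ ^ 2)) :
    (∃ l, Tendsto (fun k => F (xbar k)) atTop (𝓝 l)) ∧
      Tendsto (fun k => ‖ybar k‖) atTop (𝓝 0) ∧
      (∀ i, Tendsto (fun k => ‖x k i - xbar k‖) atTop (𝓝 0)) ∧
      (∀ i, Tendsto (fun k => ‖y k i - ybar k‖) atTop (𝓝 0)) := by
  obtain ⟨w₂, w₃, hw⟩ := exists_isLyapunovWeights hη hc hδ
  have hw₂ := hw.one_le_w₂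
  have hw₃ := hw.one_le_w₃
  set A : ℕ → ℝ := fun k => ν * (F (xbar k) - F θs)
  set X : ℕ → ℝ := fun k => ∑ i, ‖x k i - xbar k‖ ^ 2
  set Y : ℕ → ℝ := fun k => ∑ i, ‖y k i - ybar k‖ ^ 2
  set N : ℕ → ℝ := fun k => ‖ybar k‖ ^ 2
  have hA : ∀ k, 0 ≤ A k := fun k => mul_nonneg hν.le (sub_nonneg.2 (hθs _))
  have hX : ∀ k, 0 ≤ X k := fun k => sum_nonneg fun _ _ => sq_nonneg _
  have hY : ∀ k, 0 ≤ Y k := fun k => sum_nonneg fun _ _ => sq_nonneg _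
  have hN : ∀ k, 0 ≤ N k := fun k => sq_nonneg _
  have hstep : ∀ k, A (k + 1) + w₂ * X (k + 1) + w₃ * Y (k + 1) + η / 4 * (X k + Y k + N k) ≤
      (1 + (1 + w₂ + w₃) * a k) * (A k + w₂ * X k + w₃ * Y k) + (1 + w₂ + w₃) * b k :=
    fun k => hw.add_le ((div_le_iff₀ hδ.1).2 (hτδ k)) (ha0 k) (hX k) (hY k) (hN k)
      (by linarith [hrec1 k, mul_nonneg (hγ0 k) (sq_nonneg ‖gradient F (xbar k)‖)])
      (by linarith [hrec2 k]) (by linarith [hrec3 k])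
  have hη4 : 0 < η / 4 := by linarith [hη.1]
  have hK : 0 ≤ 1 + w₂ + w₃ := by linarith
  obtain ⟨⟨l, hl⟩, hsum⟩ := exists_tendsto_and_summable_of_add_le_one_add_mul_add
    (u := fun k => A k + w₂ * X k + w₃ * Y k) (e := fun k => η / 4 * (X k + Y k + N k))
    (fun k => by nlinarith [hA k, hX k, hY k]) (fun k => by nlinarith [hX k, hY k, hN k])
    (fun k => mul_nonneg hK (ha0 k)) (fun k => mul_nonneg hK (hb0 k))
    (haS.mul_left _) (hbS.mul_left _) hstep
  have hE : Tendsto (fun k => X k + Y k + N k) atTop (𝓝 0) :=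
    ((summable_mul_left_iff hη4.ne').1 hsum).tendsto_atTop_zero
  have hX0 : Tendsto X atTop (𝓝 0) := squeeze_zero hX (fun k => by linarith [hY k, hN k]) hE
  have hY0 : Tendsto Y atTop (𝓝 0) := squeeze_zero hY (fun k => by linarith [hX k, hN k]) hE
  have hN0 : Tendsto N atTop (𝓝 0) := squeeze_zero hN (fun k => by linarith [hX k, hY k]) hE
  have hAl : Tendsto A atTop (𝓝 l) := by
    convert (hl.sub (hX0.const_mul w₂)).sub (hY0.const_mul w₃) using 1
    · ext k; ring
    · simp
  refine ⟨⟨l / ν + F θs, ?_⟩, tendsto_zero_of_sq_tendsto_zero (fun _ => norm_nonneg _) hN0,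
    tendsto_norm_zero_of_tendsto_sum_norm_sq hX0, tendsto_norm_zero_of_tendsto_sum_norm_sq hY0⟩
  refine ((hAl.div_const ν).add_const (F θs)).congr fun k => ?_
  field_simp [A]
  ring

/-- Proposition 2(a). -/
theorem stmt_4 {d m : ℕ} (hm : 0 < m)
    (F : EuclideanSpace ℝ (Fin d) → ℝ)
    (hFC1 : ContDiff ℝ 1 F)
    (θs : EuclideanSpace ℝ (Fin d)) (hθs : ∀ y, F θs ≤ F y)
    (x y : ℕ → Fin m → EuclideanSpace ℝ (Fin d))
    (xbar ybar : ℕ → EuclideanSpace ℝ (Fin d))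
    (hxbar : ∀ k, xbar k = (1 / (m : ℝ)) • ∑ i, x k i)
    (hybar : ∀ k, ybar k = (1 / (m : ℝ)) • ∑ i, y k i)
    (ν : ℝ) (hν : 0 < ν)
    (η c δ : ℝ)
    (hη : η ∈ Set.Ioo (0 : ℝ) 1) (hc : c ∈ Set.Ioo (0 : ℝ) 1) (hδ : δ ∈ Set.Ioo (0 : ℝ) 1)
    (a b τ γ : ℕ → ℝ)
    (ha0 : ∀ k, 0 ≤ a k) (hb0 : ∀ k, 0 ≤ b k) (hγ0 : ∀ k, 0 ≤ γ k)
    (hτ : ∀ k, τ k ∈ Set.Ioo (0 : ℝ) 1)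
    (hτδ : ∀ k, 1 ≤ ((1 - τ k) / τ k) * δ)
    (haS : Summable a) (hbS : Summable b)
    (hrec1 : ∀ k, ν * (F (xbar (k + 1)) - F θs) ≤
      (1 + a k) * (ν * (F (xbar k) - F θs))
        + ((1 - η) + a k) * (∑ i, ‖x k i - xbar k‖ ^ 2)
        + (0 + a k) * (∑ i, ‖y k i - ybar k‖ ^ 2)
        + b k
        - (γ k * ‖gradient F (xbar k)‖ ^ 2 + ((1 - τ k) / τ k) * ‖ybar k‖ ^ 2))
    (hrec2 : ∀ k, (∑ i, ‖x (k + 1) i - xbar (k + 1)‖ ^ 2) ≤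
      (0 + a k) * (ν * (F (xbar k) - F θs))
        + (η + a k) * (∑ i, ‖x k i - xbar k‖ ^ 2)
        + (1 / (1 - η) + a k) * (∑ i, ‖y k i - ybar k‖ ^ 2)
        + b k
        - (0 * ‖gradient F (xbar k)‖ ^ 2 + 0 * ‖ybar k‖ ^ 2))
    (hrec3 : ∀ k, (∑ i, ‖y (k + 1) i - ybar (k + 1)‖ ^ 2) ≤
      (0 + a k) * (ν * (F (xbar k) - F θs))
        + ((1 - η) ^ 2 * (1 - c) * (1 - δ) + a k) * (∑ i, ‖x k i - xbar k‖ ^ 2)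
        + (c + a k) * (∑ i, ‖y k i - ybar k‖ ^ 2)
        + b k
        - (0 * ‖gradient F (xbar k)‖ ^ 2 + (-((1 - η) ^ 2 * (1 - c))) * ‖ybar k‖ ^ 2)) :
    (∃ l, Tendsto (fun k => F (xbar k)) atTop (𝓝 l)) ∧
      Tendsto (fun k => ‖ybar k‖) atTop (𝓝 0) ∧
      (∀ i, Tendsto (fun k => ‖x k i - xbar k‖) atTop (𝓝 0)) ∧
      (∀ i, Tendsto (fun k => ‖y k i - ybar k‖) atTop (𝓝 0)) :=
  stmt_4_general F θs hθs x y xbar ybar ν hν η c δ hη hc hδ a b τ γ ha0 hb0 hγ0 hτδ haS hbS hrec1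
    hrec2 hrec3
end

section
/- Let f_i : ℝ^d → ℝ (i = 1,…,m) be convex with L-Lipschitz continuous gradients, F = (1/m)∑_i f_i, and let θ* satisfy ∇F(θ*) = 0. Then for every x ∈ ℝ^d: (i) ∑_{i=1}^m ‖∇f_i(θ*) − ∇f_i(x)‖² ≤ 2mL (F(x) − F(θ*)), and consequently (ii) ∑_{i=1}^m ‖∇f_i(x)‖² ≤ 4mL (F(x) − F(θ*)) + 2 ∑_{i=1}^m ‖∇f_i(θ*)‖². -/
/-!
For a convex `f` with `L`-Lipschitz gradient `g`, the function `u ↦ f u - ⟪g x, u⟫` is convex,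
minimised at `x`, and still has `L`-Lipschitz gradient; comparing its value at `x` with the
descent-lemma bound at `y - L⁻¹ • (g y - g x)` gives cocoercivity
`f x + ⟪g x, y - x⟫ + ‖g y - g x‖² / (2L) ≤ f y`.
Summing over `i` at `x = θ*`, the linear terms vanish because `∑ ∇f_i θ* = m ∇F θ* = 0`, which is
(i); (ii) follows from (i) and `‖a‖² ≤ 2 (‖b - a‖² + ‖b‖²)`.
-/

open InnerProductSpace Set

section Gradient

variable {E : Type*} [NormedAddCommGroup E] [InnerProductSpace ℝ E] [CompleteSpace E]
  {f g : E → ℝ} {a b x : E}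

theorem hasGradientAt_inner_right (a x : E) : HasGradientAt (fun u => ⟪a, u⟫_ℝ) a x :=
  hasGradientAt_iff_hasFDerivAt.mpr (toDual ℝ E a).hasFDerivAt

theorem HasGradientAt.sub (hf : HasGradientAt f a x) (hg : HasGradientAt g b x) :
    HasGradientAt (fun u => f u - g u) (a - b) x := by
  rw [hasGradientAt_iff_hasFDerivAt, map_sub]
  exact (hasGradientAt_iff_hasFDerivAt.mp hf).sub (hasGradientAt_iff_hasFDerivAt.mp hg)

theorem HasGradientAt.const_mul (c : ℝ) (hf : HasGradientAt f a x) :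
    HasGradientAt (fun u => c * f u) (c • a) x := by
  rw [hasGradientAt_iff_hasFDerivAt, map_smul]
  exact (hasGradientAt_iff_hasFDerivAt.mp hf).const_mul c

theorem HasGradientAt.sum {ι : Type*} (s : Finset ι) {f : ι → E → ℝ} {a : ι → E}
    (hf : ∀ i ∈ s, HasGradientAt (f i) (a i) x) :
    HasGradientAt (fun u => ∑ i ∈ s, f i u) (∑ i ∈ s, a i) x := by
  rw [hasGradientAt_iff_hasFDerivAt, map_sum]
  exact HasFDerivAt.fun_sum fun i hi => hasGradientAt_iff_hasFDerivAt.mp (hf i hi)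

theorem HasGradientAt.hasDerivAt_add_smul {v : E} {t : ℝ} (hf : HasGradientAt f a (x + t • v)) :
    HasDerivAt (fun s : ℝ => f (x + s • v)) ⟪a, v⟫_ℝ t := by
  have hline : HasDerivAt (fun s : ℝ => x + s • v) v t := by
    simpa using ((hasDerivAt_id t).smul_const v).const_add x
  simpa [Function.comp_def] using (hasGradientAt_iff_hasFDerivAt.mp hf).comp_hasDerivAt t hline

end Gradient

section Smooth

variable {E : Type*} [NormedAddCommGroup E] [InnerProductSpace ℝ E] [CompleteSpace E]
  {f : E → ℝ} {g : E → E} {L : ℝ}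

theorem ConvexOn.add_inner_le_of_hasGradientAt (hconv : ConvexOn ℝ univ f)
    (hg : ∀ u, HasGradientAt f (g u) u) (x y : E) :
    f x + ⟪g x, y - x⟫_ℝ ≤ f y := by
  have hline : ConvexOn ℝ univ (fun t : ℝ => f (x + t • (y - x))) := by
    have hcomp : (fun t : ℝ => f (x + t • (y - x))) = f ∘ AffineMap.lineMap x y := by
      funext t
      simp [AffineMap.lineMap_apply_module', add_comm]
    simpa [hcomp] using hconv.comp_affineMap (AffineMap.lineMap x y)
  have hderiv : HasDerivAt (fun t : ℝ => f (x + t • (y - x))) ⟪g x, y - x⟫_ℝ 0 :=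
    HasGradientAt.hasDerivAt_add_smul (by simpa using hg x)
  have := hline.le_slope_of_hasDerivAt (mem_univ 0) (mem_univ 1) zero_lt_one hderiv
  simp only [slope_def_field, one_smul, zero_smul, add_zero, add_sub_cancel, sub_zero,
    div_one] at this
  linarith

theorem le_add_inner_add_of_lipschitz_gradient (hg : ∀ u, HasGradientAt f (g u) u)
    (hLip : ∀ u v, ‖g u - g v‖ ≤ L * ‖u - v‖) (x y : E) :
    f y ≤ f x + ⟪g x, y - x⟫_ℝ + L / 2 * ‖y - x‖ ^ 2 := by
  set v := y - x
  set G : ℝ → ℝ := fun t => f (x + t • v) - t * ⟪g x, v⟫_ℝ - L / 2 * t ^ 2 * ‖v‖ ^ 2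
  have hG : ∀ t, HasDerivAt G (⟪g (x + t • v) - g x, v⟫_ℝ - L * t * ‖v‖ ^ 2) t := by
    intro t
    have := (((hg (x + t • v)).hasDerivAt_add_smul).sub ((hasDerivAt_id t).mul_const ⟪g x, v⟫_ℝ)).sub
      (((hasDerivAt_pow 2 t).const_mul (L / 2)).mul_const (‖v‖ ^ 2))
    refine this.congr_deriv ?_
    simp only [inner_sub_left, one_mul, Nat.add_one_sub_one, pow_one, Nat.cast_ofNat]
    ring
  have hG_anti : AntitoneOn G (Icc 0 1) := by
    refine antitoneOn_of_hasDerivWithinAt_nonpos (convex_Icc 0 1)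
      (fun t _ => (hG t).continuousAt.continuousWithinAt) (fun t _ => (hG t).hasDerivWithinAt) ?_
    intro t ht
    rw [interior_Icc] at ht
    have hstep : ‖g (x + t • v) - g x‖ ≤ L * (t * ‖v‖) := by
      simpa [norm_smul, abs_of_pos ht.1] using hLip (x + t • v) x
    have := real_inner_le_norm (g (x + t • v) - g x) v
    nlinarith [mul_le_mul_of_nonneg_right hstep (norm_nonneg v)]
  have := hG_anti (left_mem_Icc.mpr zero_le_one) (right_mem_Icc.mpr zero_le_one) zero_le_one
  simp only [G, v, one_smul, zero_smul, add_zero, add_sub_cancel, one_pow, one_mul, zero_mul,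
    sub_zero, zero_pow two_ne_zero, mul_zero] at this
  linarith

theorem ConvexOn.add_inner_add_sq_le_of_lipschitz_gradient (hL : 0 < L)
    (hconv : ConvexOn ℝ univ f) (hg : ∀ u, HasGradientAt f (g u) u)
    (hLip : ∀ u v, ‖g u - g v‖ ≤ L * ‖u - v‖) (x y : E) :
    f x + ⟪g x, y - x⟫_ℝ + 1 / (2 * L) * ‖g y - g x‖ ^ 2 ≤ f y := by
  set w := g y - g x
  set z := y - L⁻¹ • w
  have hdescent := le_add_inner_add_of_lipschitz_gradient (f := fun u => f u - ⟪g x, u⟫_ℝ)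
    (fun u => (hg u).sub (hasGradientAt_inner_right (g x) u))
    (fun u v => by simpa only [sub_sub_sub_cancel_right] using hLip u v) y z
  have hfirst := hconv.add_inner_le_of_hasGradientAt hg x z
  have hzy : z - y = -(L⁻¹ • w) := by simp [z]
  have hinner : ⟪w, z - y⟫_ℝ = -(L⁻¹ * ‖w‖ ^ 2) := by
    rw [hzy, inner_neg_right, real_inner_smul_right, real_inner_self_eq_norm_sq]
  have hnorm : ‖z - y‖ ^ 2 = L⁻¹ ^ 2 * ‖w‖ ^ 2 := by
    rw [hzy, norm_neg, norm_smul, Real.norm_eq_abs, abs_of_pos (inv_pos.mpr hL), mul_pow]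
  have hconst : L⁻¹ * ‖w‖ ^ 2 - L / 2 * (L⁻¹ ^ 2 * ‖w‖ ^ 2) = 1 / (2 * L) * ‖w‖ ^ 2 := by
    field_simp
    ring
  rw [inner_sub_right] at hfirst ⊢
  rw [hinner, hnorm] at hdescent
  linarith

theorem sum_norm_sub_sq_le_of_sum_eq_zero {ι : Type*} (s : Finset ι) {f : ι → E → ℝ}
    {g : ι → E → E} (hL : 0 < L) (hconv : ∀ i ∈ s, ConvexOn ℝ univ (f i))
    (hg : ∀ i ∈ s, ∀ u, HasGradientAt (f i) (g i u) u)
    (hLip : ∀ i ∈ s, ∀ u v, ‖g i u - g i v‖ ≤ L * ‖u - v‖) {θ : E} (hθ : ∑ i ∈ s, g i θ = 0)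
    (x : E) :
    ∑ i ∈ s, ‖g i θ - g i x‖ ^ 2 ≤ 2 * L * (∑ i ∈ s, f i x - ∑ i ∈ s, f i θ) := by
  have hsum := Finset.sum_le_sum fun i hi =>
    (hconv i hi).add_inner_add_sq_le_of_lipschitz_gradient hL (hg i hi) (hLip i hi) θ x
  rw [Finset.sum_add_distrib, Finset.sum_add_distrib, ← sum_inner, hθ, inner_zero_left, add_zero,
    ← Finset.mul_sum] at hsum
  simp_rw [norm_sub_rev (g _ θ)]
  calc ∑ i ∈ s, ‖g i x - g i θ‖ ^ 2
      = 2 * L * (1 / (2 * L) * ∑ i ∈ s, ‖g i x - g i θ‖ ^ 2) := by field_simp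
    _ ≤ 2 * L * (∑ i ∈ s, f i x - ∑ i ∈ s, f i θ) := by gcongr; linarith

end Smooth

theorem norm_sq_le_two_mul_norm_sub_sq_add_norm_sq {E : Type*} [SeminormedAddCommGroup E]
    (a b : E) : ‖a‖ ^ 2 ≤ 2 * (‖b - a‖ ^ 2 + ‖b‖ ^ 2) := by
  have h : ‖a‖ ≤ ‖b - a‖ + ‖b‖ := by
    simpa [add_comm] using norm_sub_le b (b - a)
  calc ‖a‖ ^ 2 ≤ (‖b - a‖ + ‖b‖) ^ 2 := pow_le_pow_left₀ (norm_nonneg a) h 2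
    _ ≤ 2 * (‖b - a‖ ^ 2 + ‖b‖ ^ 2) := add_sq_le

/-- Gradient bounds (64) used in the analysis of PDG-NDS. -/
theorem stmt_7 {d m : ℕ} (hm : 0 < m) (L : ℝ) (hL : 0 < L)
    (f : Fin m → EuclideanSpace ℝ (Fin d) → ℝ)
    (hconv : ∀ i, ConvexOn ℝ Set.univ (f i))
    (hdiff : ∀ i, Differentiable ℝ (f i))
    (hLip : ∀ i u v, ‖gradient (f i) u - gradient (f i) v‖ ≤ L * ‖u - v‖)
    (F : EuclideanSpace ℝ (Fin d) → ℝ)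
    (hF : ∀ θ, F θ = (1 / (m : ℝ)) * ∑ i, f i θ)
    (θs : EuclideanSpace ℝ (Fin d)) (hθs : gradient F θs = 0) :
    ∀ x : EuclideanSpace ℝ (Fin d),
      (∑ i, ‖gradient (f i) θs - gradient (f i) x‖ ^ 2 ≤ 2 * m * L * (F x - F θs)) ∧
      (∑ i, ‖gradient (f i) x‖ ^ 2 ≤
        4 * m * L * (F x - F θs) + 2 * ∑ i, ‖gradient (f i) θs‖ ^ 2) := by
  intro x
  have hg : ∀ i u, HasGradientAt (f i) (gradient (f i) u) u := fun i u =>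
    (hdiff i u).hasGradientAt
  have hsum_grad : ∑ i, gradient (f i) θs = 0 := by
    have hFθ : HasGradientAt F ((1 / (m : ℝ)) • ∑ i, gradient (f i) θs) θs := by
      rw [funext hF]
      exact (HasGradientAt.sum _ fun i _ => hg i θs).const_mul _
    rw [hFθ.gradient, smul_eq_zero] at hθs
    exact hθs.resolve_left (by positivity)
  have hsum_F : ∀ θ, ∑ i, f i θ = m * F θ := fun θ => by
    rw [hF]
    field_simp
  have part1 : ∑ i, ‖gradient (f i) θs - gradient (f i) x‖ ^ 2 ≤ 2 * m * L * (F x - F θs) := by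
    convert sum_norm_sub_sq_le_of_sum_eq_zero Finset.univ hL (fun i _ => hconv i)
      (fun i _ => hg i) (fun i _ => hLip i) hsum_grad x using 1
    rw [hsum_F, hsum_F]
    ring
  refine ⟨part1, ?_⟩
  calc ∑ i, ‖gradient (f i) x‖ ^ 2
      ≤ ∑ i, 2 * (‖gradient (f i) θs - gradient (f i) x‖ ^ 2 + ‖gradient (f i) θs‖ ^ 2) :=
        Finset.sum_le_sum fun i _ => norm_sq_le_two_mul_norm_sub_sq_add_norm_sq _ _
    _ = 2 * ∑ i, ‖gradient (f i) θs - gradient (f i) x‖ ^ 2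
          + 2 * ∑ i, ‖gradient (f i) θs‖ ^ 2 := by
        rw [← Finset.mul_sum, Finset.sum_add_distrib, mul_add]
    _ ≤ 4 * m * L * (F x - F θs) + 2 * ∑ i, ‖gradient (f i) θs‖ ^ 2 := by linarith
end

section
/- Let W ∈ ℝ^{m×m} be nonnegative doubly stochastic with η := ‖W − (1/m)𝟙𝟙ᵀ‖ ∈ (0,1). Suppose vectors x_i^k, y_i^k ∈ ℝ^d satisfy the stacked update x^{k+1} = (W ⊗ I_d)x^k − y^k, and let x̄^k = (1/m)∑_i x_i^k, ȳ^k = (1/m)∑_i y_i^k. Then ∑_{i=1}^m ‖x_i^{k+1} − x̄^{k+1}‖² ≤ η ∑_{i=1}^m ‖x_i^k − x̄^k‖² + (1 − η)^{-1} ∑_{i=1}^m ‖y_i^k − ȳ^k‖². -/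
open Filter Topology

/-- Spectral (induced Euclidean) norm of a real square matrix. -/
noncomputable def specNorm {m : ℕ} (A : Matrix (Fin m) (Fin m) ℝ) : ℝ :=
  ‖Matrix.toEuclideanCLM (𝕜 := ℝ) A‖

/-! With `u = x^k − 𝟙 ⊗ x̄^k`, `v = y^k − 𝟙 ⊗ ȳ^k` and `A = W − 𝟙𝟙ᵀ/m`, double stochasticity gives
`x^{k+1} − 𝟙 ⊗ x̄^{k+1} = (A ⊗ I_d) u − v`. Since `A ⊗ I_d` acts on each of the `d` coordinates
separately, it has norm at most `‖A‖ = η`; the triangle inequality and the convexity bound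
`(η a + b)² ≤ η a² + (1 − η)⁻¹ b²` finish the proof. -/

open Finset

theorem sq_add_le_mul_sq_add_inv_one_sub_mul_sq {η : ℝ} (hη0 : 0 ≤ η) (hη1 : η < 1) (a b : ℝ) :
    (η * a + b) ^ 2 ≤ η * a ^ 2 + (1 - η)⁻¹ * b ^ 2 := by
  have h1η : 0 < 1 - η := sub_pos.2 hη1
  have gap : η * a ^ 2 + (1 - η)⁻¹ * b ^ 2 - (η * a + b) ^ 2
      = η * (1 - η)⁻¹ * ((1 - η) * a - b) ^ 2 := by
    field_simp
    ring
  have gap_nonneg : 0 ≤ η * (1 - η)⁻¹ * ((1 - η) * a - b) ^ 2 :=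
    mul_nonneg (mul_nonneg hη0 (inv_nonneg.2 h1η.le)) (sq_nonneg _)
  linarith

theorem sum_norm_sub_sq_le {ι E : Type*} [Fintype ι] [SeminormedAddCommGroup E]
    {η U : ℝ} (hη0 : 0 ≤ η) (hη1 : η < 1) (hU : 0 ≤ U) {r v : ι → E}
    (hr : ∑ i, ‖r i‖ ^ 2 ≤ η ^ 2 * U) :
    ∑ i, ‖r i - v i‖ ^ 2 ≤ η * U + (1 - η)⁻¹ * ∑ i, ‖v i‖ ^ 2 := by
  set p := WithLp.toLp 2 r
  set q := WithLp.toLp 2 v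
  have hnorm : ∀ w : ι → E, ‖WithLp.toLp 2 w‖ ^ 2 = ∑ i, ‖w i‖ ^ 2 := fun w =>
    PiLp.norm_sq_eq_of_L2 _ _
  have hp : ‖p‖ ≤ η * √U := by
    rw [← Real.sqrt_sq (norm_nonneg p), ← Real.sqrt_sq hη0, ← Real.sqrt_mul (sq_nonneg _)]
    exact Real.sqrt_le_sqrt (hnorm r ▸ hr)
  have hpq : ‖p - q‖ ≤ η * √U + ‖q‖ := (norm_sub_le p q).trans (by linarith)
  calc ∑ i, ‖r i - v i‖ ^ 2 = ‖p - q‖ ^ 2 := (hnorm (r - v)).symm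
    _ ≤ (η * √U + ‖q‖) ^ 2 := pow_le_pow_left₀ (norm_nonneg _) hpq 2
    _ ≤ η * √U ^ 2 + (1 - η)⁻¹ * ‖q‖ ^ 2 := sq_add_le_mul_sq_add_inv_one_sub_mul_sq hη0 hη1 _ _
    _ = η * U + (1 - η)⁻¹ * ∑ i, ‖v i‖ ^ 2 := by rw [Real.sq_sqrt hU, hnorm]

section SpectralBound

open scoped Matrix

variable {n ι : Type*} [Fintype n] [DecidableEq n] [Fintype ι]

theorem sum_mulVec_sq_le (A : Matrix n n ℝ) (z : n → ℝ) :
    ∑ i, (A *ᵥ z) i ^ 2 ≤ ‖Matrix.toEuclideanCLM (𝕜 := ℝ) A‖ ^ 2 * ∑ j, z j ^ 2 := by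
  have hsq : ∀ w : n → ℝ, ‖WithLp.toLp 2 w‖ ^ 2 = ∑ i, w i ^ 2 := fun w => by
    simp [EuclideanSpace.norm_sq_eq]
  have h := (Matrix.toEuclideanCLM (𝕜 := ℝ) A).le_opNorm (WithLp.toLp 2 z)
  rw [Matrix.toEuclideanCLM_toLp] at h
  rw [← hsq, ← hsq, ← mul_pow]
  exact pow_le_pow_left₀ (norm_nonneg _) h 2

theorem sum_norm_sum_smul_sq_le (A : Matrix n n ℝ) (u : n → EuclideanSpace ℝ ι) :
    ∑ i, ‖∑ j, A i j • u j‖ ^ 2 ≤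
      ‖Matrix.toEuclideanCLM (𝕜 := ℝ) A‖ ^ 2 * ∑ j, ‖u j‖ ^ 2 := by
  calc ∑ i, ‖∑ j, A i j • u j‖ ^ 2 = ∑ r, ∑ i, (A *ᵥ fun j => u j r) i ^ 2 := by
        simp [EuclideanSpace.norm_sq_eq, Matrix.mulVec, dotProduct, sum_comm (γ := ι)]
    _ ≤ ∑ r, ‖Matrix.toEuclideanCLM (𝕜 := ℝ) A‖ ^ 2 * ∑ j, u j r ^ 2 :=
        sum_le_sum fun r _ => sum_mulVec_sq_le A _
    _ = ‖Matrix.toEuclideanCLM (𝕜 := ℝ) A‖ ^ 2 * ∑ j, ‖u j‖ ^ 2 := by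
        simp [EuclideanSpace.norm_sq_eq, ← mul_sum, sum_comm (γ := ι)]

end SpectralBound

noncomputable def meanMatrix (m : ℕ) : Matrix (Fin m) (Fin m) ℝ := Matrix.of fun _ _ => 1 / m

section Average

variable {m : ℕ} {E : Type*} [AddCommGroup E] [Module ℝ E]

noncomputable def average (v : Fin m → E) : E := (1 / (m : ℝ)) • ∑ i, v i

theorem sum_sub_average (v : Fin m → E) : ∑ i, (v i - average v) = 0 := by
  rcases Nat.eq_zero_or_pos m with rfl | hm
  · simp
  · rw [sum_sub_distrib, sum_const, card_univ, Fintype.card_fin, average,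
      ← Nat.cast_smul_eq_nsmul ℝ, smul_smul, mul_one_div_cancel (by positivity), one_smul, sub_self]

theorem average_sub (v w : Fin m → E) : average (fun i => v i - w i) = average v - average w := by
  simp only [average, sum_sub_distrib, smul_sub]

theorem average_sum_smul_of_colSum_eq_one {W : Matrix (Fin m) (Fin m) ℝ}
    (hcol : ∀ j, ∑ i, W i j = 1) (v : Fin m → E) :
    average (fun i => ∑ j, W i j • v j) = average v := by
  simp only [average, sum_comm (s := univ) (t := univ), ← sum_smul, hcol, one_smul]

theorem sum_sub_meanMatrix_smul_sub_average {W : Matrix (Fin m) (Fin m) ℝ}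
    (hrow : ∀ i, ∑ j, W i j = 1) (v : Fin m → E) (i : Fin m) :
    ∑ j, (W - meanMatrix m) i j • (v j - average v) = ∑ j, W i j • v j - average v := by
  have hmean : ∑ j, (1 / (m : ℝ)) • (v j - average v) = 0 := by
    rw [← smul_sum, sum_sub_average, smul_zero]
  simp only [Matrix.sub_apply, meanMatrix, Matrix.of_apply, sub_smul]
  rw [sum_sub_distrib, hmean, sub_zero]
  simp only [smul_sub, sum_sub_distrib, ← sum_smul, hrow, one_smul]

theorem sub_average_eq_of_update {W : Matrix (Fin m) (Fin m) ℝ} (hrow : ∀ i, ∑ j, W i j = 1)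
    (hcol : ∀ j, ∑ i, W i j = 1) {x y x' : Fin m → E} (hx' : ∀ i, x' i = ∑ j, W i j • x j - y i)
    (i : Fin m) :
    x' i - average x' =
      ∑ j, (W - meanMatrix m) i j • (x j - average x) - (y i - average y) := by
  obtain rfl : x' = fun i => ∑ j, W i j • x j - y i := funext hx'
  dsimp only
  rw [sum_sub_meanMatrix_smul_sub_average hrow, average_sub,
    average_sum_smul_of_colSum_eq_one hcol]
  abel

end Average

theorem stmt_11_general {d m : ℕ}
    (W : Matrix (Fin m) (Fin m) ℝ)
    (hWrow : ∀ i, ∑ j, W i j = 1)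
    (hWcol : ∀ j, ∑ i, W i j = 1)
    (η : ℝ) (hηdef : η = specNorm (W - Matrix.of fun _ _ => (1 : ℝ) / m))
    (hη : η ∈ Set.Ioo (0 : ℝ) 1)
    (x y : ℕ → Fin m → EuclideanSpace ℝ (Fin d))
    (hupd : ∀ k i, x (k + 1) i = (∑ j, W i j • x k j) - y k i)
    (xbar ybar : ℕ → EuclideanSpace ℝ (Fin d))
    (hxbar : ∀ k, xbar k = (1 / (m : ℝ)) • ∑ i, x k i)
    (hybar : ∀ k, ybar k = (1 / (m : ℝ)) • ∑ i, y k i) :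
    ∀ k, (∑ i, ‖x (k + 1) i - xbar (k + 1)‖ ^ 2) ≤
      η * (∑ i, ‖x k i - xbar k‖ ^ 2) + (1 - η)⁻¹ * (∑ i, ‖y k i - ybar k‖ ^ 2) := by
  intro k
  obtain ⟨hη0, hη1⟩ := hη
  obtain rfl : xbar = fun k => average (x k) := funext hxbar
  obtain rfl : ybar = fun k => average (y k) := funext hybar
  simp only [sub_average_eq_of_update hWrow hWcol (hupd k)]
  refine sum_norm_sub_sq_le hη0.le hη1 (sum_nonneg fun _ _ => sq_nonneg _) ?_
  rw [hηdef, specNorm]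
  exact sum_norm_sum_smul_sq_le (W - meanMatrix m) _

/-- Relation (67): consensus contraction for the update `x^{k+1} = (W ⊗ I_d)x^k − y^k`. -/
theorem stmt_11 {d m : ℕ} (hm : 0 < m)
    (W : Matrix (Fin m) (Fin m) ℝ)
    (hWnn : ∀ i j, 0 ≤ W i j)
    (hWrow : ∀ i, ∑ j, W i j = 1)
    (hWcol : ∀ j, ∑ i, W i j = 1)
    (η : ℝ) (hηdef : η = specNorm (W - Matrix.of fun _ _ => (1 : ℝ) / m))
    (hη : η ∈ Set.Ioo (0 : ℝ) 1)
    (x y : ℕ → Fin m → EuclideanSpace ℝ (Fin d))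
    (hupd : ∀ k i, x (k + 1) i = (∑ j, W i j • x k j) - y k i)
    (xbar ybar : ℕ → EuclideanSpace ℝ (Fin d))
    (hxbar : ∀ k, xbar k = (1 / (m : ℝ)) • ∑ i, x k i)
    (hybar : ∀ k, ybar k = (1 / (m : ℝ)) • ∑ i, y k i) :
    ∀ k, (∑ i, ‖x (k + 1) i - xbar (k + 1)‖ ^ 2) ≤
      η * (∑ i, ‖x k i - xbar k‖ ^ 2) + (1 - η)⁻¹ * (∑ i, ‖y k i - ybar k‖ ^ 2) :=
  stmt_11_general W hWrow hWcol η hηdef hη x y hupd xbar ybar hxbar hybar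
end

section
/- Let f_i : ℝ^d → ℝ be convex with L-Lipschitz gradients, F = (1/m)∑_i f_i minimized at θ*, g_i^k := ∇f_i(x_i^k). Suppose λ^k ∈ ℝ^m is a nonnegative stepsize vector with positive average λ̄^k = (1/m)∑_i λ_i^k and maximum λ_max^k = max_i λ_i^k, and suppose the averages satisfy x̄^{k+1} = x̄^k − ȳ^k with ȳ^k = (1/m)∑_{i=1}^m λ_i^k g_i^k. Then, with c₁ := max{4L, 4/(mL)}, (2/L)(F(x̄^{k+1}) − F(θ*)) ≤ (2/L)(F(x̄^k) − F(θ*)) + (c₁/λ̄^k)‖λ^k − λ̄^k 𝟙‖² · ((2/L)(F(x̄^k) − F(θ*)) + ∑_{i=1}^m ‖∇f_i(θ*)‖²) + (2L/(m λ̄^k))(λ_max^k)² ∑_{i=1}^m ‖x̄^k − x_i^k‖² − (λ̄^k/L)‖∇F(x̄^k)‖² + ((λ̄^k L − 1)/(λ̄^k L))‖ȳ^k‖². -/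
/-!
The average `F` inherits the `L`-Lipschitz gradient of the `f i`, so the descent lemma gives
`F (x̄ - ȳ) ≤ F x̄ - ⟪∇F x̄, ȳ⟫ + L/2 ‖ȳ‖²`. Expanding `‖ȳ - λ̄ ∇F x̄‖²` turns this into the claimed
bound with `‖ȳ - λ̄ ∇F x̄‖² / (λ̄ L)` in place of the two error terms. The deviation
`ȳ - λ̄ ∇F x̄ = (1/m) ∑ λᵢ (∇fᵢ xᵢ - ∇fᵢ x̄) + (1/m) ∑ (λᵢ - λ̄) ∇fᵢ x̄` splits into a consensus
error, controlled by the Lipschitz gradients, and a stepsize-heterogeneity error, controlled by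
Cauchy–Schwarz and co-coercivity `‖∇fᵢ x̄ - ∇fᵢ θ*‖² ≤ 2L (fᵢ x̄ - fᵢ θ* - ⟪∇fᵢ θ*, x̄ - θ*⟫)`;
summed over `i` the linear terms cancel because `∑ ∇fᵢ θ* = 0`.
-/

open Filter Topology

/-- The all-ones vector in `EuclideanSpace ℝ (Fin m)`. -/
noncomputable def onesE (m : ℕ) : EuclideanSpace ℝ (Fin m) :=
  (WithLp.equiv 2 (Fin m → ℝ)).symm fun _ => 1

open RealInnerProductSpace Set
open scoped Gradient

section NormInequalities

variable {E : Type*} [SeminormedAddCommGroup E]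

theorem norm_add_sq_le_two_mul (a b : E) : ‖a + b‖ ^ 2 ≤ 2 * ‖a‖ ^ 2 + 2 * ‖b‖ ^ 2 :=
  calc ‖a + b‖ ^ 2 ≤ (‖a‖ + ‖b‖) ^ 2 := by gcongr; exact norm_add_le a b
    _ ≤ 2 * (‖a‖ ^ 2 + ‖b‖ ^ 2) := add_sq_le
    _ = 2 * ‖a‖ ^ 2 + 2 * ‖b‖ ^ 2 := by ring

variable [NormedSpace ℝ E] {ι : Type*}

theorem norm_sum_smul_sq_le (s : Finset ι) (c : ι → ℝ) (u : ι → E) :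
    ‖∑ i ∈ s, c i • u i‖ ^ 2 ≤ (∑ i ∈ s, c i ^ 2) * ∑ i ∈ s, ‖u i‖ ^ 2 :=
  calc ‖∑ i ∈ s, c i • u i‖ ^ 2 ≤ (∑ i ∈ s, |c i| * ‖u i‖) ^ 2 := by
        gcongr
        refine (norm_sum_le _ _).trans_eq (Finset.sum_congr rfl fun i _ => ?_)
        rw [norm_smul, Real.norm_eq_abs]
    _ ≤ (∑ i ∈ s, |c i| ^ 2) * ∑ i ∈ s, ‖u i‖ ^ 2 := Finset.sum_mul_sq_le_sq_mul_sq _ _ _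
    _ = (∑ i ∈ s, c i ^ 2) * ∑ i ∈ s, ‖u i‖ ^ 2 := by simp only [sq_abs]

variable [Fintype ι]

theorem norm_average_smul_sub_smul_average_sq_le (lam : ι → ℝ) (c : ℝ) (a b : ι → E) :
    ‖(1 / (Fintype.card ι : ℝ)) • ∑ i, lam i • a i
        - c • ((1 / (Fintype.card ι : ℝ)) • ∑ i, b i)‖ ^ 2 ≤ 2 / (Fintype.card ι : ℝ) ^ 2 *
        ((∑ i, lam i ^ 2) * ∑ i, ‖a i - b i‖ ^ 2 + (∑ i, (lam i - c) ^ 2) * ∑ i, ‖b i‖ ^ 2) := by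
  set n : ℝ := (Fintype.card ι : ℝ)
  have hsplit : (1 / n) • ∑ i, lam i • a i - c • ((1 / n) • ∑ i, b i) =
      (1 / n) • (∑ i, lam i • (a i - b i) + ∑ i, (lam i - c) • b i) := by
    rw [smul_comm, ← smul_sub, ← Finset.sum_add_distrib, Finset.smul_sum, ← Finset.sum_sub_distrib]
    congr 1
    exact Finset.sum_congr rfl fun i _ => by module
  rw [hsplit, norm_smul, mul_pow, Real.norm_eq_abs, sq_abs]
  calc (1 / n) ^ 2 * ‖∑ i, lam i • (a i - b i) + ∑ i, (lam i - c) • b i‖ ^ 2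
      ≤ (1 / n) ^ 2 * (2 * ‖∑ i, lam i • (a i - b i)‖ ^ 2 + 2 * ‖∑ i, (lam i - c) • b i‖ ^ 2) := by
        gcongr; exact norm_add_sq_le_two_mul _ _
    _ ≤ (1 / n) ^ 2 * (2 * ((∑ i, lam i ^ 2) * ∑ i, ‖a i - b i‖ ^ 2)
          + 2 * ((∑ i, (lam i - c) ^ 2) * ∑ i, ‖b i‖ ^ 2)) := by
        gcongr <;> exact norm_sum_smul_sq_le _ _ _
    _ = _ := by ring

theorem norm_average_sub_average_le [Nonempty ι] {L : ℝ} {g : ι → E → E}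
    (hg : ∀ i u v, ‖g i u - g i v‖ ≤ L * ‖u - v‖) (u v : E) :
    ‖(1 / (Fintype.card ι : ℝ)) • ∑ i, g i u - (1 / (Fintype.card ι : ℝ)) • ∑ i, g i v‖
      ≤ L * ‖u - v‖ := by
  have hn : (0 : ℝ) < Fintype.card ι := by exact_mod_cast Fintype.card_pos
  rw [← smul_sub, ← Finset.sum_sub_distrib, norm_smul, Real.norm_of_nonneg (by positivity)]
  calc 1 / (Fintype.card ι : ℝ) * ‖∑ i, (g i u - g i v)‖
      ≤ 1 / (Fintype.card ι : ℝ) * ∑ _i : ι, L * ‖u - v‖ := by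
        gcongr; exact (norm_sum_le _ _).trans (Finset.sum_le_sum fun i _ => hg i u v)
    _ = L * ‖u - v‖ := by rw [Finset.sum_const, Finset.card_univ, nsmul_eq_mul]; field_simp

end NormInequalities

section Smooth

variable {E : Type*} [NormedAddCommGroup E] [InnerProductSpace ℝ E] [CompleteSpace E]
  {f : E → ℝ} {L : ℝ}

theorem HasGradientAt.hasDerivAt_comp_add_smul {g x v : E} {t : ℝ}
    (h : HasGradientAt f g (x + t • v)) :
    HasDerivAt (fun s : ℝ => f (x + s • v)) ⟪g, v⟫ t := by
  have hline : HasDerivAt (fun s : ℝ => x + s • v) v t := by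
    simpa using ((hasDerivAt_id t).smul_const v).const_add x
  simpa [Function.comp_def, InnerProductSpace.toDual_apply_apply] using
    (hasGradientAt_iff_hasFDerivAt.mp h).comp_hasDerivAt t hline

theorem IsLocalMin.hasGradientAt_eq_zero {g x : E} (h : IsLocalMin f x) (hf : HasGradientAt f g x) :
    g = 0 :=
  (InnerProductSpace.toDual ℝ E).map_eq_zero_iff.mp
    (h.hasFDerivAt_eq_zero (hasGradientAt_iff_hasFDerivAt.mp hf))

theorem apply_add_le_of_lipschitz_gradient (hf : Differentiable ℝ f)
    (hLip : ∀ u v, ‖∇ f u - ∇ f v‖ ≤ L * ‖u - v‖) (x v : E) :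
    f (x + v) ≤ f x + ⟪∇ f x, v⟫ + L / 2 * ‖v‖ ^ 2 := by
  let φ : ℝ → ℝ := fun t => f (x + t • v) - t * ⟪∇ f x, v⟫ - L / 2 * ‖v‖ ^ 2 * t ^ 2
  have hφ : ∀ t, HasDerivAt φ (⟪∇ f (x + t • v) - ∇ f x, v⟫ - L * ‖v‖ ^ 2 * t) t := by
    intro t
    refine ((((hf _).hasGradientAt.hasDerivAt_comp_add_smul).sub
      ((hasDerivAt_id t).mul_const ⟪∇ f x, v⟫)).sub
      ((hasDerivAt_pow 2 t).const_mul (L / 2 * ‖v‖ ^ 2))).congr_deriv ?_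
    rw [inner_sub_left]
    simp only [one_mul, Nat.cast_ofNat, Nat.add_one_sub_one, pow_one, sub_right_inj]
    ring
  have hφ' : ∀ t ∈ interior (Icc (0 : ℝ) 1), deriv φ t ≤ 0 := by
    intro t ht
    rw [interior_Icc] at ht
    rw [(hφ t).deriv, sub_nonpos]
    calc ⟪∇ f (x + t • v) - ∇ f x, v⟫ ≤ ‖∇ f (x + t • v) - ∇ f x‖ * ‖v‖ := real_inner_le_norm _ _
      _ ≤ L * ‖t • v‖ * ‖v‖ := by gcongr; simpa using hLip (x + t • v) x
      _ = L * ‖v‖ ^ 2 * t := by rw [norm_smul, Real.norm_of_nonneg ht.1.le]; ring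
  have hanti := antitoneOn_of_deriv_nonpos (convex_Icc 0 1)
    (fun t _ => (hφ t).continuousAt.continuousWithinAt)
    (fun t _ => (hφ t).differentiableAt.differentiableWithinAt) hφ'
    (left_mem_Icc.2 zero_le_one) (right_mem_Icc.2 zero_le_one) zero_le_one
  simp only [φ, one_smul, one_mul, one_pow, mul_one, zero_smul, add_zero, zero_mul, sub_zero,
    ne_eq, OfNat.ofNat_ne_zero, not_false_eq_true, zero_pow, mul_zero, tsub_le_iff_right] at hanti
  linarith

theorem ConvexOn.add_inner_gradient_le (hconv : ConvexOn ℝ univ f) {x : E}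
    (hf : DifferentiableAt ℝ f x) (y : E) : f x + ⟪∇ f x, y - x⟫ ≤ f y := by
  have hline : ConvexOn ℝ univ (fun t : ℝ => f (x + t • (y - x))) := by
    simpa [Function.comp_def, AffineMap.lineMap_apply, add_comm] using
      hconv.comp_affineMap (AffineMap.lineMap x y : ℝ →ᵃ[ℝ] E)
  have hderiv : HasDerivAt (fun t : ℝ => f (x + t • (y - x))) ⟪∇ f x, y - x⟫ 0 :=
    HasGradientAt.hasDerivAt_comp_add_smul (by simpa using hf.hasGradientAt)
  have := hline.le_slope_of_hasDerivWithinAt_Ioi (mem_univ 0) (mem_univ 1) one_pos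
    hderiv.hasDerivWithinAt
  simp only [slope_def_field, one_smul, add_sub_cancel, zero_smul, add_zero, sub_zero, div_one]
    at this
  linarith

theorem ConvexOn.norm_gradient_sub_sq_le (hL : 0 < L) (hconv : ConvexOn ℝ univ f)
    (hf : Differentiable ℝ f) (hLip : ∀ u v, ‖∇ f u - ∇ f v‖ ≤ L * ‖u - v‖) (u v : E) :
    ‖∇ f u - ∇ f v‖ ^ 2 ≤ 2 * L * (f u - f v - ⟪∇ f v, u - v⟫) := by
  set δ := ∇ f u - ∇ f v
  -- compare the descent lemma at `u` with the supporting hyperplane at `v`, at the point `u + w`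
  set w := -(L⁻¹ • δ)
  have hdesc := apply_add_le_of_lipschitz_gradient hf hLip u w
  have hsupp := hconv.add_inner_gradient_le (hf v) (u + w)
  have hinner : ⟪∇ f u, w⟫ - ⟪∇ f v, w⟫ = -(L⁻¹ * ‖δ‖ ^ 2) := by
    rw [← inner_sub_left, inner_neg_right, inner_smul_right, real_inner_self_eq_norm_sq]
  have hnorm : ‖w‖ ^ 2 = L⁻¹ ^ 2 * ‖δ‖ ^ 2 := by
    rw [norm_neg, norm_smul, Real.norm_of_nonneg (inv_nonneg.2 hL.le), mul_pow]
  rw [show u + w - v = (u - v) + w by abel, inner_add_right] at hsupp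
  rw [hnorm] at hdesc
  have hbregman : L⁻¹ * ‖δ‖ ^ 2 - L / 2 * (L⁻¹ ^ 2 * ‖δ‖ ^ 2) ≤ f u - f v - ⟪∇ f v, u - v⟫ := by
    linarith
  calc ‖δ‖ ^ 2 = 2 * L * (L⁻¹ * ‖δ‖ ^ 2 - L / 2 * (L⁻¹ ^ 2 * ‖δ‖ ^ 2)) := by field_simp; ring
    _ ≤ 2 * L * (f u - f v - ⟪∇ f v, u - v⟫) := by gcongr

theorem two_div_mul_apply_sub_sub_le (hL : 0 < L) (hf : Differentiable ℝ f)
    (hLip : ∀ u v, ‖∇ f u - ∇ f v‖ ≤ L * ‖u - v‖) (x y : E) {c : ℝ} (hc : 0 < c) :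
    2 / L * (f (x - y) - f x) ≤ ‖y - c • ∇ f x‖ ^ 2 / (c * L) - c / L * ‖∇ f x‖ ^ 2
      + (c * L - 1) / (c * L) * ‖y‖ ^ 2 := by
  have hdesc := apply_add_le_of_lipschitz_gradient hf hLip x (-y)
  rw [← sub_eq_add_neg, inner_neg_right, norm_neg] at hdesc
  have hpolar : ‖y - c • ∇ f x‖ ^ 2 / (c * L) - c / L * ‖∇ f x‖ ^ 2
      + (c * L - 1) / (c * L) * ‖y‖ ^ 2 = 2 / L * (-⟪∇ f x, y⟫ + L / 2 * ‖y‖ ^ 2) := by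
    rw [norm_sub_sq_real, norm_smul, Real.norm_of_nonneg hc.le, inner_smul_right,
      real_inner_comm]
    field_simp; ring
  rw [hpolar]
  gcongr
  linarith

end Smooth

section Sums

variable {ι E : Type*} [Fintype ι] [NormedAddCommGroup E] [InnerProductSpace ℝ E]
  [CompleteSpace E] {f : ι → E → ℝ} {L : ℝ}

theorem hasGradientAt_const_mul_sum (c : ℝ) {x : E} (hf : ∀ i, DifferentiableAt ℝ (f i) x) :
    HasGradientAt (fun y => c * ∑ i, f i y) (c • ∑ i, ∇ (f i) x) x := by
  rw [hasGradientAt_iff_hasFDerivAt, map_smul, map_sum]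
  exact (HasFDerivAt.fun_sum fun i _ =>
    hasGradientAt_iff_hasFDerivAt.mp (hf i).hasGradientAt).const_mul c

theorem sum_norm_gradient_sq_le (hL : 0 < L) (hconv : ∀ i, ConvexOn ℝ univ (f i))
    (hf : ∀ i, Differentiable ℝ (f i))
    (hLip : ∀ i u v, ‖∇ (f i) u - ∇ (f i) v‖ ≤ L * ‖u - v‖)
    {y : E} (hy : ∑ i, ∇ (f i) y = 0) (x : E) :
    ∑ i, ‖∇ (f i) x‖ ^ 2 ≤ 4 * L * (∑ i, f i x - ∑ i, f i y) + 2 * ∑ i, ‖∇ (f i) y‖ ^ 2 :=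
  calc ∑ i, ‖∇ (f i) x‖ ^ 2
      ≤ ∑ i, (2 * ‖∇ (f i) x - ∇ (f i) y‖ ^ 2 + 2 * ‖∇ (f i) y‖ ^ 2) :=
        Finset.sum_le_sum fun i _ => by
          simpa only [sub_add_cancel] using
            norm_add_sq_le_two_mul (∇ (f i) x - ∇ (f i) y) (∇ (f i) y)
    _ ≤ ∑ i, (2 * (2 * L * (f i x - f i y - ⟪∇ (f i) y, x - y⟫)) + 2 * ‖∇ (f i) y‖ ^ 2) := by
        gcongr with i; exact (hconv i).norm_gradient_sub_sq_le hL (hf i) (hLip i) x y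
    _ = 4 * L * (∑ i, f i x - ∑ i, f i y - ⟪∑ i, ∇ (f i) y, x - y⟫)
          + 2 * ∑ i, ‖∇ (f i) y‖ ^ 2 := by
        simp only [sum_inner, Finset.sum_add_distrib, Finset.sum_sub_distrib, ← Finset.mul_sum]
        ring
    _ = 4 * L * (∑ i, f i x - ∑ i, f i y) + 2 * ∑ i, ‖∇ (f i) y‖ ^ 2 := by
        rw [hy, inner_zero_left, sub_zero]

theorem norm_average_smul_gradient_sub_sq_le (hL : 0 < L)
    (hconv : ∀ i, ConvexOn ℝ univ (f i)) (hf : ∀ i, Differentiable ℝ (f i))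
    (hLip : ∀ i u v, ‖∇ (f i) u - ∇ (f i) v‖ ≤ L * ‖u - v‖)
    {y : E} (hy : ∑ i, ∇ (f i) y = 0) {lam : ι → ℝ} {Λ : ℝ} (hlam0 : ∀ i, 0 ≤ lam i)
    (hΛ : ∀ i, lam i ≤ Λ) (c : ℝ) (x : ι → E) (z : E) :
    ‖(1 / (Fintype.card ι : ℝ)) • ∑ i, lam i • ∇ (f i) (x i)
        - c • ((1 / (Fintype.card ι : ℝ)) • ∑ i, ∇ (f i) z)‖ ^ 2
      ≤ 2 / (Fintype.card ι : ℝ) ^ 2 * (Fintype.card ι * Λ ^ 2 * (L ^ 2 * ∑ i, ‖z - x i‖ ^ 2)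
        + (∑ i, (lam i - c) ^ 2) *
          (4 * L * (∑ i, f i z - ∑ i, f i y) + 2 * ∑ i, ‖∇ (f i) y‖ ^ 2)) := by
  have hlam_sq : ∑ i, lam i ^ 2 ≤ Fintype.card ι * Λ ^ 2 :=
    calc ∑ i, lam i ^ 2 ≤ ∑ _i : ι, Λ ^ 2 :=
          Finset.sum_le_sum fun i _ => pow_le_pow_left₀ (hlam0 i) (hΛ i) 2
      _ = Fintype.card ι * Λ ^ 2 := by simp
  have hconsensus : ∑ i, ‖∇ (f i) (x i) - ∇ (f i) z‖ ^ 2 ≤ L ^ 2 * ∑ i, ‖z - x i‖ ^ 2 := by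
    rw [Finset.mul_sum]
    gcongr with i
    rw [← mul_pow, norm_sub_rev z]
    exact pow_le_pow_left₀ (norm_nonneg _) (hLip i _ _) 2
  refine (norm_average_smul_sub_smul_average_sq_le lam c _ _).trans ?_
  gcongr
  exact sum_norm_gradient_sq_le hL hconv hf hLip hy z

end Sums

theorem norm_sub_smul_onesE_sq {m : ℕ} (v : EuclideanSpace ℝ (Fin m)) (c : ℝ) :
    ‖v - c • onesE m‖ ^ 2 = ∑ i, (v i - c) ^ 2 := by
  simp [EuclideanSpace.norm_sq_eq, onesE]

theorem deviation_div_le {m L c lb Λ S T P Q D : ℝ} (hm : 1 ≤ m) (hL : 0 < L) (hlb : 0 < lb)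
    (hcL : 4 * L ≤ c) (hcm : 4 / (m * L) ≤ c) (hT : 0 ≤ T) (hP : 0 ≤ P) (hQ : 0 ≤ Q)
    (hD : D ≤ 2 / m ^ 2 * (m * Λ ^ 2 * (L ^ 2 * S) + T * (4 * L * (m * P) + 2 * Q))) :
    D / (lb * L) ≤ c / lb * T * (2 / L * P + Q) + 2 * L / (m * lb) * Λ ^ 2 * S := by
  have hm0 : 0 < m := one_pos.trans_le hm
  have hPterm : 8 * L * P / m ≤ c * L * (2 / L * P) :=
    calc 8 * L * P / m ≤ 8 * L * P := div_le_self (by positivity) hm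
      _ = 4 * L * (L * (2 / L * P)) := by field_simp; ring
      _ ≤ c * (L * (2 / L * P)) := by gcongr
      _ = c * L * (2 / L * P) := by ring
  have hQterm : 4 * Q / m ^ 2 ≤ c * L * Q :=
    calc 4 * Q / m ^ 2 ≤ 4 * Q / m := by gcongr; nlinarith
      _ = 4 / (m * L) * (L * Q) := by field_simp
      _ ≤ c * (L * Q) := by gcongr
      _ = c * L * Q := by ring
  rw [div_le_iff₀ (by positivity)]
  calc D ≤ 2 * L ^ 2 / m * Λ ^ 2 * S + T * (8 * L * P / m + 4 * Q / m ^ 2) := by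
        refine hD.trans_eq ?_; field_simp; ring
    _ ≤ 2 * L ^ 2 / m * Λ ^ 2 * S + T * (c * L * (2 / L * P) + c * L * Q) := by gcongr
    _ = (c / lb * T * (2 / L * P + Q) + 2 * L / (m * lb) * Λ ^ 2 * S) * (lb * L) := by
        field_simp; ring

theorem stmt_13_general {d m : ℕ} (hm : 0 < m) (L : ℝ) (hL : 0 < L)
    (f : Fin m → EuclideanSpace ℝ (Fin d) → ℝ)
    (hconv : ∀ i, ConvexOn ℝ Set.univ (f i))
    (hdiff : ∀ i, Differentiable ℝ (f i))
    (hLip : ∀ i u v, ‖gradient (f i) u - gradient (f i) v‖ ≤ L * ‖u - v‖)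
    (F : EuclideanSpace ℝ (Fin d) → ℝ)
    (hF : ∀ θ, F θ = (1 / (m : ℝ)) * ∑ i, f i θ)
    (θs : EuclideanSpace ℝ (Fin d)) (hθs : ∀ z, F θs ≤ F z)
    (lam : ℕ → EuclideanSpace ℝ (Fin m)) (hlam0 : ∀ k i, 0 ≤ lam k i)
    (lambar : ℕ → ℝ)
    (hlambarpos : ∀ k, 0 < lambar k)
    (lammax : ℕ → ℝ) (hlammax : ∀ k, IsGreatest (Set.range fun i => lam k i) (lammax k))
    (x : ℕ → Fin m → EuclideanSpace ℝ (Fin d))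
    (xbar : ℕ → EuclideanSpace ℝ (Fin d))
    (ybar : ℕ → EuclideanSpace ℝ (Fin d))
    (hybar : ∀ k, ybar k = (1 / (m : ℝ)) • ∑ i, lam k i • gradient (f i) (x k i))
    (hupd : ∀ k, xbar (k + 1) = xbar k - ybar k)
    (c₁ : ℝ) (hc₁ : c₁ = max (4 * L) (4 / (m * L))) :
    ∀ k, 2 / L * (F (xbar (k + 1)) - F θs) ≤
      2 / L * (F (xbar k) - F θs)
        + c₁ / lambar k * ‖lam k - lambar k • onesE m‖ ^ 2 *
            (2 / L * (F (xbar k) - F θs) + ∑ i, ‖gradient (f i) θs‖ ^ 2)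
        + 2 * L / (m * lambar k) * (lammax k) ^ 2 * (∑ i, ‖xbar k - x k i‖ ^ 2)
        - lambar k / L * ‖gradient F (xbar k)‖ ^ 2
        + (lambar k * L - 1) / (lambar k * L) * ‖ybar k‖ ^ 2 := by
  intro k
  rw [hupd, norm_sub_smul_onesE_sq]
  have hm1 : (1 : ℝ) ≤ m := by exact_mod_cast hm
  have : Nonempty (Fin m) := ⟨⟨0, hm⟩⟩
  have hFgrad : ∀ θ, HasGradientAt F ((1 / (m : ℝ)) • ∑ i, ∇ (f i) θ) θ := fun θ => by
    simpa only [← funext hF] using hasGradientAt_const_mul_sum (1 / (m : ℝ)) fun i => hdiff i θ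
  have hLipF : ∀ u v, ‖∇ F u - ∇ F v‖ ≤ L * ‖u - v‖ := fun u v => by
    simpa only [(hFgrad _).gradient, Fintype.card_fin] using
      norm_average_sub_average_le (fun i => hLip i) u v
  have hcrit : ∑ i, ∇ (f i) θs = 0 := by
    have hmin : IsLocalMin F θs := Eventually.of_forall hθs
    simpa [hm.ne'] using hmin.hasGradientAt_eq_zero (hFgrad θs)
  have hdescent := two_div_mul_apply_sub_sub_le hL (fun θ => (hFgrad θ).differentiableAt) hLipF
    (xbar k) (ybar k) (hlambarpos k)
  have hdev := norm_average_smul_gradient_sub_sq_le hL hconv hdiff hLip hcrit (hlam0 k)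
    (fun i => (hlammax k).2 ⟨i, rfl⟩) (lambar k) (x k) (xbar k)
  have hsum : ∑ i, f i (xbar k) - ∑ i, f i θs = m * (F (xbar k) - F θs) := by
    rw [hF, hF]; field_simp
  simp only [Fintype.card_fin, ← hybar, ← (hFgrad _).gradient, hsum] at hdev
  linarith [deviation_div_le hm1 hL (hlambarpos k) (hc₁ ▸ le_max_left _ _)
    (hc₁ ▸ le_max_right _ _) (by positivity) (sub_nonneg.2 (hθs _)) (by positivity) hdev]

/-- Relation (65): Step I estimate for `(2/L)(F(x̄^{k+1}) − F(θ*))` in PDG-NDS. -/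
theorem stmt_13 {d m : ℕ} (hm : 0 < m) (L : ℝ) (hL : 0 < L)
    (f : Fin m → EuclideanSpace ℝ (Fin d) → ℝ)
    (hconv : ∀ i, ConvexOn ℝ Set.univ (f i))
    (hdiff : ∀ i, Differentiable ℝ (f i))
    (hLip : ∀ i u v, ‖gradient (f i) u - gradient (f i) v‖ ≤ L * ‖u - v‖)
    (F : EuclideanSpace ℝ (Fin d) → ℝ)
    (hF : ∀ θ, F θ = (1 / (m : ℝ)) * ∑ i, f i θ)
    (θs : EuclideanSpace ℝ (Fin d)) (hθs : ∀ z, F θs ≤ F z)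
    (lam : ℕ → EuclideanSpace ℝ (Fin m)) (hlam0 : ∀ k i, 0 ≤ lam k i)
    (lambar : ℕ → ℝ) (hlambar : ∀ k, lambar k = (1 / (m : ℝ)) * ∑ i, lam k i)
    (hlambarpos : ∀ k, 0 < lambar k)
    (lammax : ℕ → ℝ) (hlammax : ∀ k, IsGreatest (Set.range fun i => lam k i) (lammax k))
    (x : ℕ → Fin m → EuclideanSpace ℝ (Fin d))
    (xbar : ℕ → EuclideanSpace ℝ (Fin d))
    (hxbar : ∀ k, xbar k = (1 / (m : ℝ)) • ∑ i, x k i)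
    (ybar : ℕ → EuclideanSpace ℝ (Fin d))
    (hybar : ∀ k, ybar k = (1 / (m : ℝ)) • ∑ i, lam k i • gradient (f i) (x k i))
    (hupd : ∀ k, xbar (k + 1) = xbar k - ybar k)
    (c₁ : ℝ) (hc₁ : c₁ = max (4 * L) (4 / (m * L))) :
    ∀ k, 2 / L * (F (xbar (k + 1)) - F θs) ≤
      2 / L * (F (xbar k) - F θs)
        + c₁ / lambar k * ‖lam k - lambar k • onesE m‖ ^ 2 *
            (2 / L * (F (xbar k) - F θs) + ∑ i, ‖gradient (f i) θs‖ ^ 2)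
        + 2 * L / (m * lambar k) * (lammax k) ^ 2 * (∑ i, ‖xbar k - x k i‖ ^ 2)
        - lambar k / L * ‖gradient F (xbar k)‖ ^ 2
        + (lambar k * L - 1) / (lambar k * L) * ‖ybar k‖ ^ 2 :=
  stmt_13_general hm L hL f hconv hdiff hLip F hF θs hθs lam hlam0 lambar hlambarpos lammax hlammax
    x xbar ybar hybar hupd c₁ hc₁
end

section
/- Let W ∈ ℝ^{m×m} be nonnegative doubly stochastic, B^k nonnegative column-stochastic, Λ^k = diag(λ₁^k,…,λ_m^k), and let g^k = (g₁^k,…,g_m^k) ∈ ℝ^{md} be arbitrary. Suppose x^1 = (W ⊗ I_d)x^0 − (Λ^0 ⊗ I_d)g^0, y^k := (W ⊗ I_d)x^k − x^{k+1}, and y^{k+1} = (W ⊗ I_d)y^k + ((B^k Λ^{k+1}) ⊗ I_d)g^{k+1} − ((B^k Λ^k) ⊗ I_d)g^k for all k ≥ 0. Then the average ȳ^k = (1/m)∑_{i=1}^m y_i^k satisfies ȳ^k = (1/m)∑_{i=1}^m λ_i^k g_i^k for all k ≥ 0, and consequently x̄^{k+1} = x̄^k − (1/m)∑_{i=1}^m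 λ_i^k g_i^k. -/
open Filter Topology

/-!
Summing the tracking recursion over the agents, the column stochasticity of `W` and of every
`B^k` makes each mixing step disappear: the increments of `∑ᵢ yᵢᵏ` equal those of
`∑ᵢ λᵢᵏ gᵢᵏ`, and the two sums agree at `k = 0` by the initialisation. Summing the definition of
`yᵏ` in the same way gives `∑ᵢ yᵢᵏ = ∑ᵢ xᵢᵏ - ∑ᵢ xᵢᵏ⁺¹`, which is the update of `x̄`.
-/

theorem Finset.sum_sum_smul_of_sum_col_eq_one {ι R M : Type*} [Fintype ι] [Semiring R]
    [AddCommMonoid M] [Module R M] {A : ι → ι → R} (hA : ∀ j, ∑ i, A i j = 1) (v : ι → M) :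
    ∑ i, ∑ j, A i j • v j = ∑ j, v j := by
  rw [Finset.sum_comm]
  exact Finset.sum_congr rfl fun j _ => by rw [← Finset.sum_smul, hA j, one_smul]

theorem eq_of_eq_zero_of_sub_succ_eq {G : Type*} [AddGroup G] {a b : ℕ → G} (h0 : a 0 = b 0)
    (hsucc : ∀ k, a (k + 1) - a k = b (k + 1) - b k) : a = b := by
  funext k
  induction k with
  | zero => exact h0
  | succ k ih => rw [← sub_add_cancel (a (k + 1)) (a k), hsucc, ih, sub_add_cancel]

theorem stmt_18_general {d m : ℕ}
    (W : Matrix (Fin m) (Fin m) ℝ)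
    (hWcol : ∀ j, ∑ i, W i j = 1)
    (B : ℕ → Matrix (Fin m) (Fin m) ℝ)
    (hBcol : ∀ k j, ∑ i, B k i j = 1)
    (lam : ℕ → Fin m → ℝ)
    (g : ℕ → Fin m → EuclideanSpace ℝ (Fin d))
    (x y : ℕ → Fin m → EuclideanSpace ℝ (Fin d))
    (hinit : ∀ i, x 1 i = (∑ j, W i j • x 0 j) - lam 0 i • g 0 i)
    (hy : ∀ k i, y k i = (∑ j, W i j • x k j) - x (k + 1) i)
    (hyrec : ∀ k i, y (k + 1) i =
      (∑ j, W i j • y k j)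
        + (∑ j, (B k i j * lam (k + 1) j) • g (k + 1) j)
        - (∑ j, (B k i j * lam k j) • g k j))
    (xbar ybar : ℕ → EuclideanSpace ℝ (Fin d))
    (hxbar : ∀ k, xbar k = (1 / (m : ℝ)) • ∑ i, x k i)
    (hybar : ∀ k, ybar k = (1 / (m : ℝ)) • ∑ i, y k i) :
    (∀ k, ybar k = (1 / (m : ℝ)) • ∑ i, lam k i • g k i) ∧
      ∀ k, xbar (k + 1) = xbar k - (1 / (m : ℝ)) • ∑ i, lam k i • g k i := by
  have hBmix : ∀ k l, ∑ i, ∑ j, (B k i j * lam l j) • g l j = ∑ j, lam l j • g l j := fun k l => by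
    simp only [mul_smul]
    exact Finset.sum_sum_smul_of_sum_col_eq_one (hBcol k) _
  have hsum_y : ∀ k, ∑ i, y k i = ∑ i, x k i - ∑ i, x (k + 1) i := fun k => by
    simp only [hy, Finset.sum_sub_distrib, Finset.sum_sum_smul_of_sum_col_eq_one hWcol]
  have htrack : (fun k => ∑ i, y k i) = fun k => ∑ i, lam k i • g k i := by
    refine eq_of_eq_zero_of_sub_succ_eq ?_ fun k => ?_
    · simp only [hsum_y, hinit, Finset.sum_sub_distrib,
        Finset.sum_sum_smul_of_sum_col_eq_one hWcol, sub_sub_cancel]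
    · simp only [hyrec, Finset.sum_sub_distrib, Finset.sum_add_distrib, hBmix,
        Finset.sum_sum_smul_of_sum_col_eq_one hWcol]
      abel
  refine ⟨fun k => by rw [hybar, congrFun htrack k], fun k => ?_⟩
  rw [hxbar, hxbar, ← congrFun htrack k, hsum_y, ← smul_sub, sub_sub_cancel]

/-- Relations (39)–(40): the auxiliary variable `y^k` of PDG-NDS tracks the
stepsize-weighted average of the gradients. -/
theorem stmt_18 {d m : ℕ} (hm : 0 < m)
    (W : Matrix (Fin m) (Fin m) ℝ)
    (hWnn : ∀ i j, 0 ≤ W i j)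
    (hWrow : ∀ i, ∑ j, W i j = 1)
    (hWcol : ∀ j, ∑ i, W i j = 1)
    (B : ℕ → Matrix (Fin m) (Fin m) ℝ)
    (hBnn : ∀ k i j, 0 ≤ B k i j)
    (hBcol : ∀ k j, ∑ i, B k i j = 1)
    (lam : ℕ → Fin m → ℝ)
    (g : ℕ → Fin m → EuclideanSpace ℝ (Fin d))
    (x y : ℕ → Fin m → EuclideanSpace ℝ (Fin d))
    (hinit : ∀ i, x 1 i = (∑ j, W i j • x 0 j) - lam 0 i • g 0 i)
    (hy : ∀ k i, y k i = (∑ j, W i j • x k j) - x (k + 1) i)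
    (hyrec : ∀ k i, y (k + 1) i =
      (∑ j, W i j • y k j)
        + (∑ j, (B k i j * lam (k + 1) j) • g (k + 1) j)
        - (∑ j, (B k i j * lam k j) • g k j))
    (xbar ybar : ℕ → EuclideanSpace ℝ (Fin d))
    (hxbar : ∀ k, xbar k = (1 / (m : ℝ)) • ∑ i, x k i)
    (hybar : ∀ k, ybar k = (1 / (m : ℝ)) • ∑ i, y k i) :
    (∀ k, ybar k = (1 / (m : ℝ)) • ∑ i, lam k i • g k i) ∧
      ∀ k, xbar (k + 1) = xbar k - (1 / (m : ℝ)) • ∑ i, lam k i • g k i :=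
  stmt_18_general W hWcol B hBcol lam g x y hinit hy hyrec xbar ybar hxbar hybar
end
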